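/- arXiv:2004.08543 — 3 statements merged into one kernel-verified Lean document; each statement's English description precedes it below -/
import Mathlib

section
/- (Third-order integration-by-parts constraints, n = 1.) In the Gaussian-smoothing setup with n = 1, for every t > 0, writing f_j(x) for the j-th derivative of x ↦ p_t(x) (so f₀ = p_t), the following six integrals all vanish: ∫_ℝ (5·f₀·f₁⁴·f₂ − 4·f₁⁶)/f₀⁵ dx = 0; ∫_ℝ (2·f₀³·f₁·f₂·f₃ + f₀³·f₂³ − 2·f₀²·f₁²·f₂²)/f₀⁵ dx = 0; ∫_ℝ (f₀⁴·f₁·f₅ + f₀⁴·f₂·f₄ − f₀³·f₁²·f₄)/f₀⁵ dx = 0; ∫_ℝ (f₀³·f₁²·f₄ + 2·f₀³·f₁·f₂·f₃ − 2·f₀²·f₁³·f₃)/f₀⁵ dx = 0; ∫_ℝ (f₀²·f₁³·f₃ + 3·f₀²·f₁²·f₂² − 3·f₀·f₁⁴·f₂)/f₀⁵ dx = 0; ∫_ℝ (f₀⁴·f₂·f₄ + f₀⁴·f₃² − f₀³·f₁·f₂·f₃)/f₀⁵ dx = 0. -/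
open MeasureTheory Real Filter Topology Polynomial

namespace ThirdOrderAux

/-- FTC on ℝ: the integral of a derivative with vanishing limits at `±∞` is zero. -/
lemma integral_deriv_eq_zero {G G' : ℝ → ℝ} (hd : ∀ x, HasDerivAt G (G' x) x)
    (htop : Tendsto G atTop (𝓝 0)) (hbot : Tendsto G atBot (𝓝 0)) :
    ∫ x, G' x = 0 := by
  by_cases hi : Integrable G'
  · rw [← intervalIntegral.integral_Iic_add_Ioi (b := 0) hi.integrableOn hi.integrableOn,
      integral_Ioi_of_hasDerivAt_of_tendsto' (fun x _ => hd x) hi.integrableOn htop,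
      integral_Iic_of_hasDerivAt_of_tendsto' (fun x _ => hd x) hi.integrableOn hbot]
    ring
  · exact integral_undef hi

lemma sqrt_tendsto_atTop : Tendsto Real.sqrt atTop atTop := by
  apply tendsto_atTop.2
  intro b
  filter_upwards [eventually_ge_atTop (max 0 (b ^ 2))] with y hy
  calc b ≤ |b| := le_abs_self b
    _ = Real.sqrt (b ^ 2) := (Real.sqrt_sq_eq_abs b).symm
    _ ≤ Real.sqrt y := Real.sqrt_le_sqrt ((le_max_right _ _).trans hy)

lemma tendsto_one_add_sqrt_pow_mul_exp_neg (k : ℕ) :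
    Tendsto (fun y : ℝ => (1 + Real.sqrt y) ^ k * Real.exp (-y)) atTop (𝓝 0) := by
  have h1 : Tendsto (fun s : ℝ => (1 + s) ^ k * Real.exp (-s)) atTop (𝓝 0) := by
    have := ((Polynomial.X + Polynomial.C 1 : ℝ[X]) ^ k).tendsto_div_exp_atTop
    refine this.congr fun s => ?_
    simp [Real.exp_neg, div_eq_mul_inv, add_comm]
  have h2 : Tendsto (fun y : ℝ => (1 + Real.sqrt y) ^ k * Real.exp (-Real.sqrt y))
      atTop (𝓝 0) := h1.comp sqrt_tendsto_atTop
  apply squeeze_zero_norm' _ h2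
  filter_upwards [eventually_ge_atTop (1 : ℝ)] with y hy
  have h0 : (0:ℝ) ≤ y := by linarith
  have hs : Real.sqrt y ≤ y := by
    calc Real.sqrt y ≤ Real.sqrt (y ^ 2) := Real.sqrt_le_sqrt (by nlinarith)
      _ = y := by rw [Real.sqrt_sq h0]
  have hsn : 0 ≤ Real.sqrt y := Real.sqrt_nonneg y
  rw [Real.norm_eq_abs, abs_of_nonneg (by positivity)]
  have : Real.exp (-y) ≤ Real.exp (-Real.sqrt y) := Real.exp_le_exp.2 (by linarith)
  exact mul_le_mul_of_nonneg_left this (by positivity)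



/-- Hermite-type polynomials for the Gaussian kernel `exp (-u^2/(2t))`. -/
noncomputable def Pk (t : ℝ) : ℕ → ℝ[X]
  | 0 => 1
  | j + 1 => derivative (Pk t j) - Polynomial.C t⁻¹ * Polynomial.X * Pk t j

/-- `j`-th derivative of the Gaussian kernel. -/
noncomputable def gk (t : ℝ) (j : ℕ) (u : ℝ) : ℝ :=
  (Pk t j).eval u * Real.exp (-u ^ 2 / (2 * t))

lemma gk_zero (t u : ℝ) : gk t 0 u = Real.exp (-u ^ 2 / (2 * t)) := by
  simp [gk, Pk]

lemma gk_cont (t : ℝ) (j : ℕ) : Continuous (gk t j) := by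
  apply ((Pk t j).continuous).mul
  exact Real.continuous_exp.comp (by fun_prop)

lemma gk_hasDerivAt (t : ℝ) (j : ℕ) (u : ℝ) : HasDerivAt (gk t j) (gk t (j + 1) u) u := by
  have h1 : HasDerivAt (fun u : ℝ => (Pk t j).eval u) ((derivative (Pk t j)).eval u) u :=
    (Pk t j).hasDerivAt u
  have h3 : HasDerivAt (fun u : ℝ => -u ^ 2 / (2 * t)) (-(t⁻¹ * u)) u := by
    have h : HasDerivAt (fun u : ℝ => -u ^ 2 / (2 * t)) _ u :=
      ((hasDerivAt_pow 2 u).neg).div_const (2 * t)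
    convert h using 1
    rw [div_eq_mul_inv, mul_inv]
    ring
  have h2 := h3.exp
  have h : HasDerivAt (gk t j) _ u := h1.mul h2
  convert h using 1
  show gk t (j + 1) u = _
  simp only [gk, Pk, eval_sub, eval_mul, eval_C, eval_X]
  ring

lemma abs_pow_mul_exp_le (t : ℝ) (ht : 0 < t) (i : ℕ) (u : ℝ) :
    |u| ^ i * Real.exp (-u ^ 2 / (4 * t)) ≤ 1 + i.factorial * (4 * t) ^ i := by
  have h4t : (0:ℝ) < 4 * t := by linarith
  have hx : (0:ℝ) ≤ u ^ 2 / (4 * t) := by positivity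
  have hfac : (0:ℝ) < i.factorial := by exact_mod_cast i.factorial_pos
  have key : (u ^ 2) ^ i ≤ i.factorial * (4 * t) ^ i * Real.exp (u ^ 2 / (4 * t)) := by
    have h := Real.pow_div_factorial_le_exp (x := u ^ 2 / (4 * t)) hx i
    rw [div_pow, div_div] at h
    rw [div_le_iff₀ (by positivity)] at h
    calc (u ^ 2) ^ i ≤ Real.exp (u ^ 2 / (4 * t)) * ((4 * t) ^ i * i.factorial) := h
      _ = i.factorial * (4 * t) ^ i * Real.exp (u ^ 2 / (4 * t)) := by ring
  have habs : |u| ^ i ≤ 1 + (u ^ 2) ^ i := by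
    rcases le_or_gt |u| 1 with h | h
    · have h1 : |u| ^ i ≤ 1 := pow_le_one₀ (abs_nonneg u) h
      have h2 : (0:ℝ) ≤ (u ^ 2) ^ i := by positivity
      linarith
    · have h1 : |u| ^ i ≤ |u| ^ (2 * i) := pow_le_pow_right₀ h.le (by omega)
      have h2 : |u| ^ (2 * i) = (u ^ 2) ^ i := by
        rw [pow_mul, sq_abs]
      linarith [h1, h2.le]
  have hexp1 : Real.exp (-u ^ 2 / (4 * t)) ≤ 1 := by
    rw [Real.exp_le_one_iff]
    have : (0:ℝ) ≤ u ^ 2 / (4 * t) := hx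
    rw [neg_div]
    linarith
  have hexppos : (0:ℝ) < Real.exp (-u ^ 2 / (4 * t)) := Real.exp_pos _
  calc |u| ^ i * Real.exp (-u ^ 2 / (4 * t))
      ≤ (1 + (u ^ 2) ^ i) * Real.exp (-u ^ 2 / (4 * t)) := by
        apply mul_le_mul_of_nonneg_right habs hexppos.le
    _ = Real.exp (-u ^ 2 / (4 * t)) + (u ^ 2) ^ i * Real.exp (-u ^ 2 / (4 * t)) := by ring
    _ ≤ 1 + i.factorial * (4 * t) ^ i := by
        have h5 : (u ^ 2) ^ i * Real.exp (-u ^ 2 / (4 * t)) ≤ i.factorial * (4 * t) ^ i := by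
          calc (u ^ 2) ^ i * Real.exp (-u ^ 2 / (4 * t))
              ≤ (i.factorial * (4 * t) ^ i * Real.exp (u ^ 2 / (4 * t))) *
                Real.exp (-u ^ 2 / (4 * t)) := by
                apply mul_le_mul_of_nonneg_right key hexppos.le
            _ = i.factorial * (4 * t) ^ i := by
                rw [mul_assoc, ← Real.exp_add]
                simp [neg_div]
        linarith

lemma poly_bound (t : ℝ) (ht : 0 < t) (Q : ℝ[X]) :
    ∃ C : ℝ, 1 ≤ C ∧ ∀ u, |Q.eval u| * Real.exp (-u ^ 2 / (4 * t)) ≤ C := by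
  classical
  refine ⟨(∑ i ∈ Finset.range (Q.natDegree + 1),
      |Q.coeff i| * (1 + i.factorial * (4 * t) ^ i)) + 1, ?_, ?_⟩
  · have : (0:ℝ) ≤ ∑ i ∈ Finset.range (Q.natDegree + 1),
        |Q.coeff i| * (1 + i.factorial * (4 * t) ^ i) := by
      apply Finset.sum_nonneg
      intro i _
      have h1 : (0:ℝ) ≤ 1 + i.factorial * (4 * t) ^ i := by positivity
      exact mul_nonneg (abs_nonneg _) h1
    linarith
  · intro u
    have h1 : |Q.eval u| ≤ ∑ i ∈ Finset.range (Q.natDegree + 1), |Q.coeff i| * |u| ^ i := by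
      rw [Polynomial.eval_eq_sum_range]
      refine (Finset.abs_sum_le_sum_abs _ _).trans (le_of_eq ?_)
      apply Finset.sum_congr rfl
      intro i _
      rw [abs_mul, abs_pow]
    have hexp : (0:ℝ) < Real.exp (-u ^ 2 / (4 * t)) := Real.exp_pos _
    calc |Q.eval u| * Real.exp (-u ^ 2 / (4 * t))
        ≤ (∑ i ∈ Finset.range (Q.natDegree + 1), |Q.coeff i| * |u| ^ i) *
            Real.exp (-u ^ 2 / (4 * t)) := mul_le_mul_of_nonneg_right h1 hexp.le
      _ = ∑ i ∈ Finset.range (Q.natDegree + 1),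
            |Q.coeff i| * (|u| ^ i * Real.exp (-u ^ 2 / (4 * t))) := by
          rw [Finset.sum_mul]; apply Finset.sum_congr rfl; intro i _; ring
      _ ≤ ∑ i ∈ Finset.range (Q.natDegree + 1),
            |Q.coeff i| * (1 + i.factorial * (4 * t) ^ i) := by
          apply Finset.sum_le_sum
          intro i _
          exact mul_le_mul_of_nonneg_left (abs_pow_mul_exp_le t ht i u) (abs_nonneg _)
      _ ≤ _ := by linarith

lemma poly_growth (Q : ℝ[X]) :
    ∃ D : ℝ, 1 ≤ D ∧ ∀ u, |Q.eval u| ≤ D * (1 + |u|) ^ Q.natDegree := by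
  classical
  refine ⟨(∑ i ∈ Finset.range (Q.natDegree + 1), |Q.coeff i|) + 1, ?_, ?_⟩
  · have : (0:ℝ) ≤ ∑ i ∈ Finset.range (Q.natDegree + 1), |Q.coeff i| :=
      Finset.sum_nonneg fun i _ => abs_nonneg _
    linarith
  · intro u
    have hb : (1:ℝ) ≤ 1 + |u| := by have := abs_nonneg u; linarith
    have h1 : |Q.eval u| ≤ ∑ i ∈ Finset.range (Q.natDegree + 1), |Q.coeff i| * |u| ^ i := by
      rw [Polynomial.eval_eq_sum_range]
      refine (Finset.abs_sum_le_sum_abs _ _).trans (le_of_eq ?_)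
      exact Finset.sum_congr rfl fun i _ => by rw [abs_mul, abs_pow]
    have h2 : ∀ i ∈ Finset.range (Q.natDegree + 1), |Q.coeff i| * |u| ^ i ≤
        |Q.coeff i| * (1 + |u|) ^ Q.natDegree := by
      intro i hi
      apply mul_le_mul_of_nonneg_left _ (abs_nonneg _)
      calc |u| ^ i ≤ (1 + |u|) ^ i :=
            pow_le_pow_left₀ (abs_nonneg u) (by linarith) i
        _ ≤ (1 + |u|) ^ Q.natDegree :=
            pow_le_pow_right₀ hb (by simpa using Finset.mem_range_succ_iff.mp hi)
    calc |Q.eval u| ≤ ∑ i ∈ Finset.range (Q.natDegree + 1), |Q.coeff i| * (1 + |u|) ^ Q.natDegree :=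
          h1.trans (Finset.sum_le_sum h2)
      _ = (∑ i ∈ Finset.range (Q.natDegree + 1), |Q.coeff i|) * (1 + |u|) ^ Q.natDegree := by
          rw [Finset.sum_mul]
      _ ≤ _ := by
          have hp : (0:ℝ) ≤ (1 + |u|) ^ Q.natDegree := by positivity
          nlinarith [hp]

lemma natDegree_Pk (t : ℝ) : ∀ j, (Pk t j).natDegree ≤ j := by
  intro j
  induction j with
  | zero => simp [Pk]
  | succ j ih =>
    show (derivative (Pk t j) - Polynomial.C t⁻¹ * Polynomial.X * Pk t j).natDegree ≤ j + 1
    refine (Polynomial.natDegree_sub_le _ _).trans ?_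
    rw [max_le_iff]
    constructor
    · exact ((Pk t j).natDegree_derivative_le).trans (by omega)
    · refine (Polynomial.natDegree_mul_le).trans ?_
      have h1 : (Polynomial.C t⁻¹ * Polynomial.X : ℝ[X]).natDegree ≤ 1 :=
        (Polynomial.natDegree_mul_le).trans (by simp)
      omega

lemma gk_bound_j (t : ℝ) (ht : 0 < t) (j : ℕ) (hj : j ≤ 5) :
    ∃ C : ℝ, 1 ≤ C ∧
      (∀ u, |gk t j u| ≤ C * ((1 + |u|) ^ 5 * Real.exp (-u ^ 2 / (2 * t)))) ∧
      (∀ u, |gk t j u| ≤ C * Real.exp (-u ^ 2 / (4 * t))) := by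
  obtain ⟨C₁, hC₁, h₁⟩ := poly_bound t ht (Pk t j)
  obtain ⟨D, hD, hDb⟩ := poly_growth (Pk t j)
  have habs : ∀ u : ℝ, |gk t j u| = |(Pk t j).eval u| * Real.exp (-u ^ 2 / (2 * t)) := by
    intro u
    rw [gk, abs_mul, abs_of_pos (Real.exp_pos _)]
  refine ⟨C₁ + D, by linarith, fun u => ?_, fun u => ?_⟩
  · rw [habs]
    have hnd : (1 + |u|) ^ (Pk t j).natDegree ≤ (1 + |u|) ^ 5 :=
      pow_le_pow_right₀ (by have := abs_nonneg u; linarith) ((natDegree_Pk t j).trans hj)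
    have h2 := hDb u
    have hE : (0:ℝ) < Real.exp (-u ^ 2 / (2 * t)) := Real.exp_pos _
    have hP5 : (0:ℝ) ≤ (1 + |u|) ^ 5 := by positivity
    calc |(Pk t j).eval u| * Real.exp (-u ^ 2 / (2 * t))
        ≤ D * (1 + |u|) ^ (Pk t j).natDegree * Real.exp (-u ^ 2 / (2 * t)) :=
          mul_le_mul_of_nonneg_right h2 hE.le
      _ ≤ D * (1 + |u|) ^ 5 * Real.exp (-u ^ 2 / (2 * t)) := by
          apply mul_le_mul_of_nonneg_right _ hE.le
          exact mul_le_mul_of_nonneg_left hnd (by linarith)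
      _ ≤ (C₁ + D) * ((1 + |u|) ^ 5 * Real.exp (-u ^ 2 / (2 * t))) := by
          rw [← mul_assoc]
          apply mul_le_mul_of_nonneg_right _ hE.le
          exact mul_le_mul_of_nonneg_right (by linarith) hP5
  · rw [habs]
    have hsplit : Real.exp (-u ^ 2 / (2 * t)) =
        Real.exp (-u ^ 2 / (4 * t)) * Real.exp (-u ^ 2 / (4 * t)) := by
      rw [← Real.exp_add]
      congr 1
      field_simp
      ring
    have h2 := h₁ u
    have hE : (0:ℝ) < Real.exp (-u ^ 2 / (4 * t)) := Real.exp_pos _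
    have hE1 : Real.exp (-u ^ 2 / (4 * t)) ≤ 1 := by
      rw [Real.exp_le_one_iff, neg_div]
      have : (0:ℝ) ≤ u ^ 2 / (4 * t) := by positivity
      linarith
    rw [hsplit, ← mul_assoc]
    have h3 : |(Pk t j).eval u| * Real.exp (-u ^ 2 / (4 * t)) * Real.exp (-u ^ 2 / (4 * t))
        ≤ C₁ * Real.exp (-u ^ 2 / (4 * t)) := by
      apply mul_le_mul_of_nonneg_right h2 hE.le
    nlinarith

lemma gk_bounds (t : ℝ) (ht : 0 < t) :
    ∃ C : ℝ, 1 ≤ C ∧ ∀ j, j ≤ 5 →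
      (∀ u, |gk t j u| ≤ C * ((1 + |u|) ^ 5 * Real.exp (-u ^ 2 / (2 * t)))) ∧
      (∀ u, |gk t j u| ≤ C * Real.exp (-u ^ 2 / (4 * t))) := by
  obtain ⟨C0, h0, h0a, h0b⟩ := gk_bound_j t ht 0 (by norm_num)
  obtain ⟨C1, h1, h1a, h1b⟩ := gk_bound_j t ht 1 (by norm_num)
  obtain ⟨C2, h2, h2a, h2b⟩ := gk_bound_j t ht 2 (by norm_num)
  obtain ⟨C3, h3, h3a, h3b⟩ := gk_bound_j t ht 3 (by norm_num)
  obtain ⟨C4, h4, h4a, h4b⟩ := gk_bound_j t ht 4 (by norm_num)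
  obtain ⟨C5, h5, h5a, h5b⟩ := gk_bound_j t ht 5 (by norm_num)
  refine ⟨C0 + C1 + C2 + C3 + C4 + C5, by linarith, ?_⟩
  intro j hj
  have key : ∀ Cj : ℝ, Cj ≤ C0 + C1 + C2 + C3 + C4 + C5 →
      (∀ u, |gk t j u| ≤ Cj * ((1 + |u|) ^ 5 * Real.exp (-u ^ 2 / (2 * t)))) →
      (∀ u, |gk t j u| ≤ Cj * Real.exp (-u ^ 2 / (4 * t))) →
      (∀ u, |gk t j u| ≤ (C0 + C1 + C2 + C3 + C4 + C5) *
          ((1 + |u|) ^ 5 * Real.exp (-u ^ 2 / (2 * t)))) ∧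
      (∀ u, |gk t j u| ≤ (C0 + C1 + C2 + C3 + C4 + C5) * Real.exp (-u ^ 2 / (4 * t))) := by
    intro Cj hle ha hb
    constructor
    · intro u
      refine (ha u).trans (mul_le_mul_of_nonneg_right hle (by positivity))
    · intro u
      refine (hb u).trans (mul_le_mul_of_nonneg_right hle (by positivity))
  interval_cases j
  · exact key C0 (by linarith) h0a h0b
  · exact key C1 (by linarith) h1a h1b
  · exact key C2 (by linarith) h2a h2b
  · exact key C3 (by linarith) h3a h3b
  · exact key C4 (by linarith) h4a h4b
  · exact key C5 (by linarith) h5a h5b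

lemma gk_bounded (t : ℝ) (ht : 0 < t) (j : ℕ) (hj : j ≤ 5) :
    ∃ C : ℝ, 1 ≤ C ∧ ∀ u, |gk t j u| ≤ C := by
  obtain ⟨C, hC, _, hb⟩ := gk_bound_j t ht j hj
  refine ⟨C, hC, fun u => (hb u).trans ?_⟩
  have hE1 : Real.exp (-u ^ 2 / (4 * t)) ≤ 1 := by
    rw [Real.exp_le_one_iff, neg_div]
    have : (0:ℝ) ≤ u ^ 2 / (4 * t) := by positivity
    linarith
  nlinarith

/-- Normalizing constant. -/
noncomputable def ck (t : ℝ) : ℝ := (2 * Real.pi * t) ^ (-(1:ℝ) / 2)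

lemma ck_pos {t : ℝ} (ht : 0 < t) : 0 < ck t :=
  Real.rpow_pos_of_pos (mul_pos (mul_pos two_pos Real.pi_pos) ht) _

/-- The `j`-th derivative of the smoothed density. -/
noncomputable def Fk (p : ℝ → ℝ) (t : ℝ) (j : ℕ) (x : ℝ) : ℝ :=
  ck t * ∫ y, p y * gk t j (x - y)

section Main

variable {p : ℝ → ℝ} {t : ℝ}

lemma p_integrable (hmass : ∫ x, p x = 1) : Integrable p := by
  by_contra h
  rw [integral_undef h] at hmass
  norm_num at hmass

lemma slice_aesm (hmeas : Measurable p) (t : ℝ) (j : ℕ) (x : ℝ) :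
    AEStronglyMeasurable (fun y => p y * gk t j (x - y)) volume := by
  apply Measurable.aestronglyMeasurable
  exact hmeas.mul ((gk_cont t j).measurable.comp (measurable_const.sub measurable_id))

lemma slice_integrable (hmeas : Measurable p) (hnonneg : ∀ x, 0 ≤ p x)
    (hmass : ∫ x, p x = 1) (ht : 0 < t) {j : ℕ} (hj : j ≤ 5) (x : ℝ) :
    Integrable (fun y => p y * gk t j (x - y)) := by
  obtain ⟨C, hC, hb⟩ := gk_bounded t ht j hj
  apply Integrable.mono' ((p_integrable hmass).const_mul C) (slice_aesm hmeas t j x)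
  filter_upwards with y
  rw [Real.norm_eq_abs, abs_mul, abs_of_nonneg (hnonneg y)]
  calc p y * |gk t j (x - y)| ≤ p y * C := mul_le_mul_of_nonneg_left (hb _) (hnonneg y)
    _ = C * p y := mul_comm _ _

lemma Fk_hasDerivAt (hmeas : Measurable p) (hnonneg : ∀ x, 0 ≤ p x)
    (hmass : ∫ x, p x = 1) (ht : 0 < t) {j : ℕ} (hj : j + 1 ≤ 5) (x₀ : ℝ) :
    HasDerivAt (Fk p t j) (Fk p t (j + 1) x₀) x₀ := by
  obtain ⟨C, hC, hb⟩ := gk_bounded t ht (j + 1) hj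
  have key := hasDerivAt_integral_of_dominated_loc_of_deriv_le (μ := volume)
    (F := fun x y => p y * gk t j (x - y)) (F' := fun x y => p y * gk t (j + 1) (x - y))
    (x₀ := x₀) (bound := fun y => C * p y) (s := Metric.ball x₀ 1) (Metric.ball_mem_nhds x₀ zero_lt_one)
    (Eventually.of_forall fun x => slice_aesm hmeas t j x)
    (slice_integrable hmeas hnonneg hmass ht (by omega) x₀)
    (slice_aesm hmeas t (j + 1) x₀)
    ?_ ((p_integrable hmass).const_mul C) ?_
  · exact (key.2).const_mul (ck t)
  · filter_upwards with y
    intro x _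
    rw [Real.norm_eq_abs, abs_mul, abs_of_nonneg (hnonneg y)]
    calc p y * |gk t (j + 1) (x - y)| ≤ p y * C := mul_le_mul_of_nonneg_left (hb _) (hnonneg y)
      _ = C * p y := mul_comm _ _
  · filter_upwards with y
    intro x _
    have h1 : HasDerivAt (fun x : ℝ => x - y) 1 x := (hasDerivAt_id x).sub_const y
    have h2 := (gk_hasDerivAt t j (x - y)).comp x h1
    rw [mul_one] at h2
    exact h2.const_mul (p y)

lemma Fk0_pos (hmeas : Measurable p) (hnonneg : ∀ x, 0 ≤ p x)
    (hmass : ∫ x, p x = 1) (ht : 0 < t) (x : ℝ) : 0 < Fk p t 0 x := by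
  apply mul_pos (ck_pos ht)
  have hnn : ∀ y, 0 ≤ p y * gk t 0 (x - y) := by
    intro y
    rw [gk_zero]
    exact mul_nonneg (hnonneg y) (Real.exp_pos _).le
  have hint := slice_integrable hmeas hnonneg hmass ht (by norm_num : (0:ℕ) ≤ 5) x
  rcases (integral_nonneg (f := fun y => p y * gk t 0 (x - y)) hnn).lt_or_eq with h | h
  · exact h
  · exfalso
    have h0 := (integral_eq_zero_iff_of_nonneg hnn hint).1 h.symm
    have hp0 : p =ᵐ[volume] 0 := by
      filter_upwards [h0] with y hy
      have : p y * gk t 0 (x - y) = 0 := hy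
      rw [gk_zero] at this
      rcases mul_eq_zero.1 this with h' | h'
      · exact h'
      · exact absurd h' (Real.exp_pos _).ne'
    have hzero : (∫ x, p x) = 0 := by
      rw [integral_congr_ae hp0]
      simp
    rw [hmass] at hzero
    norm_num at hzero

lemma Fk0_le (hmeas : Measurable p) (hnonneg : ∀ x, 0 ≤ p x)
    (hmass : ∫ x, p x = 1) (ht : 0 < t) (x : ℝ) : Fk p t 0 x ≤ ck t := by
  rw [Fk]
  have h1 : (∫ y, p y * gk t 0 (x - y)) ≤ ∫ y, p y := by
    apply integral_mono (slice_integrable hmeas hnonneg hmass ht (by norm_num) x)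
      (p_integrable hmass)
    intro y
    dsimp only
    rw [gk_zero]
    apply mul_le_of_le_one_right (hnonneg y)
    rw [Real.exp_le_one_iff, neg_div]
    have : (0:ℝ) ≤ (x - y) ^ 2 / (2 * t) := by positivity
    linarith
  rw [hmass] at h1
  calc ck t * ∫ y, p y * gk t 0 (x - y) ≤ ck t * 1 :=
        mul_le_mul_of_nonneg_left h1 (ck_pos ht).le
    _ = ck t := mul_one _

lemma Fk0_tendsto (hmeas : Measurable p) (hnonneg : ∀ x, 0 ≤ p x)
    (hmass : ∫ x, p x = 1) (ht : 0 < t) {l : Filter ℝ} [l.IsCountablyGenerated]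
    (hl : Tendsto (fun x : ℝ => |x|) l atTop) :
    Tendsto (Fk p t 0) l (𝓝 0) := by
  have key : Tendsto (fun x => ∫ y, p y * gk t 0 (x - y)) l (𝓝 (∫ _ : ℝ, (0:ℝ))) := by
    apply tendsto_integral_filter_of_dominated_convergence (bound := p)
    · exact Eventually.of_forall fun x => slice_aesm hmeas t 0 x
    · filter_upwards with x
      filter_upwards with y
      rw [Real.norm_eq_abs, gk_zero, abs_mul, abs_of_nonneg (hnonneg y),
        abs_of_pos (Real.exp_pos _)]
      apply mul_le_of_le_one_right (hnonneg y)
      rw [Real.exp_le_one_iff, neg_div]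
      have : (0:ℝ) ≤ (x - y) ^ 2 / (2 * t) := by positivity
      linarith
    · exact p_integrable hmass
    · filter_upwards with y
      have h1 : Tendsto (fun x : ℝ => -(x - y) ^ 2 / (2 * t)) l atBot := by
        have h2 : Tendsto (fun x : ℝ => (x - y) ^ 2) l atTop := by
          have h3 : Tendsto (fun x : ℝ => |x - y|) l atTop := by
            apply tendsto_atTop.2
            intro b
            have := tendsto_atTop.1 hl (b + |y|)
            filter_upwards [this] with x hx
            have habs : |x| ≤ |x - y| + |y| := by
              calc |x| = |x - y + y| := by ring_nf
                _ ≤ |x - y| + |y| := abs_add_le _ _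
            linarith
          have h4 : Tendsto (fun x : ℝ => |x - y| ^ 2) l atTop :=
            (tendsto_pow_atTop (by norm_num)).comp h3
          refine h4.congr fun x => ?_
          rw [sq_abs]
        have h7 : Tendsto (fun x : ℝ => (x - y) ^ 2 / (2 * t)) l atTop :=
          h2.atTop_div_const (by linarith)
        have h8 := tendsto_neg_atTop_atBot.comp h7
        refine h8.congr fun x => ?_
        simp [neg_div]
      have h5 : Tendsto (fun x : ℝ => Real.exp (-(x - y) ^ 2 / (2 * t))) l (𝓝 0) :=
        Real.tendsto_exp_atBot.comp h1
      have h6 : Tendsto (fun x : ℝ => p y * Real.exp (-(x - y) ^ 2 / (2 * t))) l (𝓝 (p y * 0)) :=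
        h5.const_mul (p y)
      rw [mul_zero] at h6
      refine h6.congr fun x => ?_
      rw [gk_zero]
  rw [integral_zero] at key
  have := key.const_mul (ck t)
  rw [mul_zero] at this
  exact this

end Main

section Master

variable {p : ℝ → ℝ} {t : ℝ}

set_option maxHeartbeats 1000000 in
lemma master_bound (hmeas : Measurable p) (hnonneg : ∀ x, 0 ≤ p x)
    (hmass : ∫ x, p x = 1) (ht : 0 < t) :
    ∃ K : ℝ, 1 ≤ K ∧ (∀ x, Fk p t 0 x ≤ K) ∧
      ∀ j, j ≤ 5 → ∀ x, |Fk p t j x| ≤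
        Fk p t 0 x * (K * (1 + Real.sqrt (Real.log (K / Fk p t 0 x))) ^ 5) := by
  obtain ⟨C, hC1, hCb⟩ := gk_bounds t ht
  set c := ck t with hc_def
  have hc : 0 < c := ck_pos ht
  set K := c * C + C * (1 + Real.sqrt (4 * t)) ^ 5 + 1 with hK_def
  have hsq4t : (0:ℝ) ≤ Real.sqrt (4 * t) := Real.sqrt_nonneg _
  have hC0 : (0:ℝ) < C := by linarith
  have hKpos : (0:ℝ) < K := by positivity
  have hK1 : (1:ℝ) ≤ K := by
    have h1 : (0:ℝ) ≤ c * C := by positivity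
    have h2 : (0:ℝ) ≤ C * (1 + Real.sqrt (4 * t)) ^ 5 := by positivity
    linarith
  have hcCK : c * C ≤ K := by
    have h2 : (0:ℝ) ≤ C * (1 + Real.sqrt (4 * t)) ^ 5 := by positivity
    linarith
  have hFle : ∀ x, Fk p t 0 x ≤ K := by
    intro x
    have h1 := Fk0_le hmeas hnonneg hmass ht x
    have h2 : c ≤ c * C := le_mul_of_one_le_right hc.le hC1
    linarith
  refine ⟨K, hK1, hFle, ?_⟩
  intro j hj x
  set ε := Fk p t 0 x with hε_def
  have hε : 0 < ε := Fk0_pos hmeas hnonneg hmass ht x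
  have hεK : ε ≤ K := hFle x
  set y := Real.log (K / ε) with hy_def
  have hy : 0 ≤ y := Real.log_nonneg ((one_le_div hε).2 hεK)
  set R := Real.sqrt (4 * t * y) with hR_def
  have hR : 0 ≤ R := Real.sqrt_nonneg _
  have hR2 : R ^ 2 = 4 * t * y := Real.sq_sqrt (by positivity)
  have hexpR : Real.exp (-R ^ 2 / (4 * t)) = ε / K := by
    rw [hR2]
    rw [show -(4 * t * y) / (4 * t) = -y by field_simp, Real.exp_neg,
      Real.exp_log (by positivity), inv_div]
  -- pointwise kernel bound
  have pointwise : ∀ u, |gk t j u| ≤ (C * (1 + R) ^ 5) * gk t 0 u + C * (ε / K) := by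
    intro u
    have hgk0 : 0 < gk t 0 u := by rw [gk_zero]; exact Real.exp_pos _
    have hB : 0 ≤ C * (ε / K) := by positivity
    rcases le_or_gt |u| R with h | h
    · have h1 := (hCb j hj).1 u
      have h2 : (1 + |u|) ^ 5 ≤ (1 + R) ^ 5 :=
        pow_le_pow_left₀ (by positivity) (by linarith) 5
      have h3 : |gk t j u| ≤ C * (1 + R) ^ 5 * gk t 0 u := by
        rw [gk_zero]
        calc |gk t j u| ≤ C * ((1 + |u|) ^ 5 * Real.exp (-u ^ 2 / (2 * t))) := h1
          _ ≤ C * ((1 + R) ^ 5 * Real.exp (-u ^ 2 / (2 * t))) := by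
              apply mul_le_mul_of_nonneg_left _ hC0.le
              exact mul_le_mul_of_nonneg_right h2 (Real.exp_pos _).le
          _ = C * (1 + R) ^ 5 * Real.exp (-u ^ 2 / (2 * t)) := by ring
      linarith
    · have h1 := (hCb j hj).2 u
      have hu2 : R ^ 2 ≤ u ^ 2 := by
        have := sq_abs u
        nlinarith [abs_nonneg u]
      have h2 : Real.exp (-u ^ 2 / (4 * t)) ≤ Real.exp (-R ^ 2 / (4 * t)) := by
        apply Real.exp_le_exp.2
        exact div_le_div_of_nonneg_right (by linarith) (by linarith)
      have h3 : |gk t j u| ≤ C * (ε / K) := by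
        calc |gk t j u| ≤ C * Real.exp (-u ^ 2 / (4 * t)) := h1
          _ ≤ C * Real.exp (-R ^ 2 / (4 * t)) := mul_le_mul_of_nonneg_left h2 hC0.le
          _ = C * (ε / K) := by rw [hexpR]
      have h4 : 0 ≤ C * (1 + R) ^ 5 * gk t 0 u := by positivity
      linarith
  -- integral comparison
  set A := C * (1 + R) ^ 5 with hA_def
  have hA : 0 ≤ A := by positivity
  have hIabs : |∫ y', p y' * gk t j (x - y')| ≤ ∫ y', |p y' * gk t j (x - y')| := by
    simpa [Real.norm_eq_abs, abs_mul] using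
      norm_integral_le_integral_norm (μ := volume) (fun y' => p y' * gk t j (x - y'))
  have hint1 : Integrable (fun y' => |p y' * gk t j (x - y')|) :=
    (slice_integrable hmeas hnonneg hmass ht hj x).abs
  have hint2 : Integrable (fun y' => A * (p y' * gk t 0 (x - y')) + (C * (ε / K)) * p y') :=
    (((slice_integrable hmeas hnonneg hmass ht (by norm_num) x)).const_mul A).add
      ((p_integrable hmass).const_mul _)
  have hmono : (∫ y', |p y' * gk t j (x - y')|) ≤
      ∫ y', A * (p y' * gk t 0 (x - y')) + (C * (ε / K)) * p y' := by
    apply integral_mono hint1 hint2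
    intro y'
    dsimp only
    rw [abs_mul, abs_of_nonneg (hnonneg y')]
    calc p y' * |gk t j (x - y')| ≤ p y' * (A * gk t 0 (x - y') + C * (ε / K)) :=
          mul_le_mul_of_nonneg_left (pointwise _) (hnonneg y')
      _ = A * (p y' * gk t 0 (x - y')) + (C * (ε / K)) * p y' := by ring
  have hval : (∫ y', A * (p y' * gk t 0 (x - y')) + (C * (ε / K)) * p y')
      = A * (∫ y', p y' * gk t 0 (x - y')) + C * (ε / K) := by
    rw [integral_add (((slice_integrable hmeas hnonneg hmass ht (by norm_num) x)).const_mul A)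
      ((p_integrable hmass).const_mul _), integral_const_mul, integral_const_mul, hmass, mul_one]
  have hI0 : c * (∫ y', p y' * gk t 0 (x - y')) = ε := rfl
  have key : |Fk p t j x| ≤ A * ε + c * C * (ε / K) := by
    rw [Fk, abs_mul, abs_of_pos hc]
    calc c * |∫ y', p y' * gk t j (x - y')|
        ≤ c * (∫ y', |p y' * gk t j (x - y')|) := mul_le_mul_of_nonneg_left hIabs hc.le
      _ ≤ c * (A * (∫ y', p y' * gk t 0 (x - y')) + C * (ε / K)) := by
          apply mul_le_mul_of_nonneg_left _ hc.le
          rw [← hval]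
          exact hmono
      _ = A * (c * (∫ y', p y' * gk t 0 (x - y'))) + c * C * (ε / K) := by ring
      _ = A * ε + c * C * (ε / K) := by rw [hI0]
  -- final massaging
  have hsy : 0 ≤ Real.sqrt y := Real.sqrt_nonneg _
  have hRsplit : R = Real.sqrt (4 * t) * Real.sqrt y := by
    rw [hR_def, Real.sqrt_mul (by positivity)]
  have h1R : 1 + R ≤ (1 + Real.sqrt (4 * t)) * (1 + Real.sqrt y) := by
    rw [hRsplit]
    nlinarith
  have hA2 : A ≤ C * (1 + Real.sqrt (4 * t)) ^ 5 * (1 + Real.sqrt y) ^ 5 := by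
    rw [hA_def]
    calc C * (1 + R) ^ 5 ≤ C * ((1 + Real.sqrt (4 * t)) * (1 + Real.sqrt y)) ^ 5 := by
          apply mul_le_mul_of_nonneg_left _ hC0.le
          exact pow_le_pow_left₀ (by positivity) h1R 5
      _ = C * (1 + Real.sqrt (4 * t)) ^ 5 * (1 + Real.sqrt y) ^ 5 := by rw [mul_pow]; ring
  have htail : c * C * (ε / K) ≤ ε := by
    rw [div_eq_mul_inv]
    calc c * C * (ε * K⁻¹) = (c * C) * K⁻¹ * ε := by ring
      _ ≤ 1 * ε := by
          apply mul_le_mul_of_nonneg_right _ hε.le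
          rw [← div_eq_mul_inv]
          exact div_le_one_of_le₀ hcCK hKpos.le
      _ = ε := one_mul ε
  have hfin : A * ε + ε ≤ ε * (K * (1 + Real.sqrt y) ^ 5) := by
    have hsy5 : (1:ℝ) ≤ (1 + Real.sqrt y) ^ 5 := one_le_pow₀ (by linarith)
    have h5 : A + 1 ≤ K * (1 + Real.sqrt y) ^ 5 := by
      calc A + 1 ≤ C * (1 + Real.sqrt (4 * t)) ^ 5 * (1 + Real.sqrt y) ^ 5 + 1 := by linarith
        _ ≤ C * (1 + Real.sqrt (4 * t)) ^ 5 * (1 + Real.sqrt y) ^ 5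
            + (c * C + 1) * (1 + Real.sqrt y) ^ 5 := by
            have h6 : (1:ℝ) ≤ (c * C + 1) * (1 + Real.sqrt y) ^ 5 := by
              have h7 : (1:ℝ) * 1 ≤ (c * C + 1) * (1 + Real.sqrt y) ^ 5 := by
                apply mul_le_mul _ hsy5 zero_le_one (by positivity)
                nlinarith
              linarith
            linarith
        _ = K * (1 + Real.sqrt y) ^ 5 := by rw [hK_def]; ring
    calc A * ε + ε = ε * (A + 1) := by ring
      _ ≤ ε * (K * (1 + Real.sqrt y) ^ 5) := mul_le_mul_of_nonneg_left h5 hε.le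
  calc |Fk p t j x| ≤ A * ε + c * C * (ε / K) := key
    _ ≤ A * ε + ε := by linarith
    _ ≤ ε * (K * (1 + Real.sqrt y) ^ 5) := hfin

end Master

lemma decay_general {f : ℝ → ℝ} {K : ℝ} {l : Filter ℝ} (hK : 1 ≤ K) (hpos : ∀ x, 0 < f x)
    (h0 : Tendsto f l (𝓝 0)) :
    Tendsto (fun x => f x * (K * (1 + Real.sqrt (Real.log (K / f x))) ^ 5) ^ 5) l (𝓝 0) := by
  have hKpos : (0:ℝ) < K := lt_of_lt_of_le one_pos hK
  have hy : Tendsto (fun x => Real.log (K / f x)) l atTop := by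
    have h1 : Tendsto f l (𝓝[>] 0) :=
      tendsto_nhdsWithin_iff.2 ⟨h0, Eventually.of_forall fun x => hpos x⟩
    have h2 : Tendsto (fun x => Real.log (f x)) l atBot :=
      Real.tendsto_log_nhdsGT_zero.comp h1
    have h3 : (fun x => Real.log (K / f x)) = fun x => Real.log K + -Real.log (f x) :=
      funext fun x => by
        rw [Real.log_div hKpos.ne' (hpos x).ne']
        ring
    rw [h3]
    exact tendsto_atTop_add_const_left l _ (tendsto_neg_atBot_atTop.comp h2)
  have key := (tendsto_one_add_sqrt_pow_mul_exp_neg 25).comp hy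
  have key2 : Tendsto (fun x => K ^ 26 *
      ((1 + Real.sqrt (Real.log (K / f x))) ^ 25 * Real.exp (-Real.log (K / f x)))) l (𝓝 0) := by
    have := key.const_mul (K ^ 26)
    rwa [mul_zero] at this
  apply squeeze_zero_norm _ key2
  intro x
  set s := Real.sqrt (Real.log (K / f x)) with hs_def
  set E := Real.exp (-Real.log (K / f x)) with hE_def
  have hs : 0 ≤ s := Real.sqrt_nonneg _
  have hE : 0 < E := Real.exp_pos _
  have hfx : f x = K * E := by
    rw [hE_def, Real.exp_neg, Real.exp_log (div_pos hKpos (hpos x)), inv_div]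
    field_simp
  have hG : 0 < f x * (K * (1 + s) ^ 5) ^ 5 :=
    mul_pos (hpos x) (pow_pos (mul_pos hKpos (pow_pos (by linarith) 5)) 5)
  rw [Real.norm_eq_abs, abs_of_pos hG]
  calc f x * (K * (1 + s) ^ 5) ^ 5
      = K ^ 6 * ((1 + s) ^ 25 * E) := by
        rw [hfx, mul_pow, ← pow_mul]
        ring
    _ ≤ K ^ 26 * ((1 + s) ^ 25 * E) := by
        apply mul_le_mul_of_nonneg_right (pow_le_pow_right₀ hK (by norm_num))
        positivity

lemma prod_bound {e φ : ℝ} (he : 0 < e) (hφ : 1 ≤ φ) {a b : ℝ} (m n : ℕ)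
    (ha : |a| ≤ e * φ) (hb : |b| ≤ e * φ) (hmn : m + n ≤ 5) (h1 : 1 ≤ m + n) :
    |a ^ m * b ^ n / e ^ (m + n - 1)| ≤ e * φ ^ 5 := by
  have hφ0 : (0:ℝ) < φ := lt_of_lt_of_le one_pos hφ
  rw [abs_div, abs_mul, abs_pow, abs_pow, abs_pow, abs_of_pos he,
    div_le_iff₀ (by positivity)]
  have hsum : m + n = 1 + (m + n - 1) := by omega
  calc |a| ^ m * |b| ^ n
      ≤ (e * φ) ^ m * (e * φ) ^ n := by
        apply mul_le_mul (pow_le_pow_left₀ (abs_nonneg a) ha m)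
          (pow_le_pow_left₀ (abs_nonneg b) hb n) (by positivity) (by positivity)
    _ = e ^ (m + n) * φ ^ (m + n) := by rw [← pow_add, mul_pow]
    _ ≤ e ^ (m + n) * φ ^ 5 := by
        apply mul_le_mul_of_nonneg_left (pow_le_pow_right₀ hφ hmn) (by positivity)
    _ = e * φ ^ 5 * e ^ (m + n - 1) := by
        conv_lhs => rw [hsum]
        rw [pow_add, pow_one]
        ring


end ThirdOrderAux

open ThirdOrderAux in
set_option maxHeartbeats 2000000 in
/-- The six third-order integration-by-parts constraints (n = 1), where `f_j`
denotes the `j`-th spatial derivative of the smoothed density `p_t`. -/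
theorem third_order_constraints
    (p : ℝ → ℝ)
    (hmeas : Measurable p)
    (hnonneg : ∀ x, 0 ≤ p x)
    (hmass : ∫ x, p x = 1)
    (hmom : Integrable (fun x : ℝ => x ^ 2 * p x))
    (pt : ℝ → ℝ → ℝ)
    (hpt : ∀ t, 0 < t → ∀ x, pt t x =
      (2 * Real.pi * t) ^ (-(1 : ℝ) / 2) *
        ∫ y, p y * Real.exp (-(x - y) ^ 2 / (2 * t))) :
    ∀ t, 0 < t →
      (∫ x, (5 * pt t x * iteratedDeriv 1 (pt t) x ^ 4 * iteratedDeriv 2 (pt t) x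
          - 4 * iteratedDeriv 1 (pt t) x ^ 6) / pt t x ^ 5 = 0) ∧
      (∫ x, (2 * pt t x ^ 3 * iteratedDeriv 1 (pt t) x * iteratedDeriv 2 (pt t) x *
              iteratedDeriv 3 (pt t) x
          + pt t x ^ 3 * iteratedDeriv 2 (pt t) x ^ 3
          - 2 * pt t x ^ 2 * iteratedDeriv 1 (pt t) x ^ 2 * iteratedDeriv 2 (pt t) x ^ 2) /
            pt t x ^ 5 = 0) ∧
      (∫ x, (pt t x ^ 4 * iteratedDeriv 1 (pt t) x * iteratedDeriv 5 (pt t) x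
          + pt t x ^ 4 * iteratedDeriv 2 (pt t) x * iteratedDeriv 4 (pt t) x
          - pt t x ^ 3 * iteratedDeriv 1 (pt t) x ^ 2 * iteratedDeriv 4 (pt t) x) /
            pt t x ^ 5 = 0) ∧
      (∫ x, (pt t x ^ 3 * iteratedDeriv 1 (pt t) x ^ 2 * iteratedDeriv 4 (pt t) x
          + 2 * pt t x ^ 3 * iteratedDeriv 1 (pt t) x * iteratedDeriv 2 (pt t) x *
              iteratedDeriv 3 (pt t) x
          - 2 * pt t x ^ 2 * iteratedDeriv 1 (pt t) x ^ 3 * iteratedDeriv 3 (pt t) x) /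
            pt t x ^ 5 = 0) ∧
      (∫ x, (pt t x ^ 2 * iteratedDeriv 1 (pt t) x ^ 3 * iteratedDeriv 3 (pt t) x
          + 3 * pt t x ^ 2 * iteratedDeriv 1 (pt t) x ^ 2 * iteratedDeriv 2 (pt t) x ^ 2
          - 3 * pt t x * iteratedDeriv 1 (pt t) x ^ 4 * iteratedDeriv 2 (pt t) x) /
            pt t x ^ 5 = 0) ∧
      (∫ x, (pt t x ^ 4 * iteratedDeriv 2 (pt t) x * iteratedDeriv 4 (pt t) x
          + pt t x ^ 4 * iteratedDeriv 3 (pt t) x ^ 2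
          - pt t x ^ 3 * iteratedDeriv 1 (pt t) x * iteratedDeriv 2 (pt t) x *
              iteratedDeriv 3 (pt t) x) / pt t x ^ 5 = 0) := by
  intro t ht
  obtain ⟨K, hK1, hKle, hKb⟩ := master_bound hmeas hnonneg hmass ht
  have hpos : ∀ x, 0 < Fk p t 0 x := Fk0_pos hmeas hnonneg hmass ht
  have hne : ∀ x, Fk p t 0 x ≠ 0 := fun x => (hpos x).ne'
  have hφ1 : ∀ x, (1:ℝ) ≤ K * (1 + Real.sqrt (Real.log (K / Fk p t 0 x))) ^ 5 := by
    intro x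
    have hs : (0:ℝ) ≤ Real.sqrt (Real.log (K / Fk p t 0 x)) := Real.sqrt_nonneg _
    have h5 : (1:ℝ) ≤ (1 + Real.sqrt (Real.log (K / Fk p t 0 x))) ^ 5 :=
      one_le_pow₀ (by linarith)
    calc (1:ℝ) = 1 * 1 := (one_mul 1).symm
      _ ≤ K * (1 + Real.sqrt (Real.log (K / Fk p t 0 x))) ^ 5 :=
        mul_le_mul hK1 h5 zero_le_one (by linarith)
  have hD : ∀ j, j ≤ 4 → ∀ x, HasDerivAt (Fk p t j) (Fk p t (j + 1) x) x := fun j hj x =>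
    Fk_hasDerivAt hmeas hnonneg hmass ht (by omega) x
  have hdtop : Tendsto (fun x => Fk p t 0 x *
      (K * (1 + Real.sqrt (Real.log (K / Fk p t 0 x))) ^ 5) ^ 5) atTop (𝓝 0) :=
    decay_general hK1 hpos
      (Fk0_tendsto hmeas hnonneg hmass ht tendsto_abs_atTop_atTop)
  have hdbot : Tendsto (fun x => Fk p t 0 x *
      (K * (1 + Real.sqrt (Real.log (K / Fk p t 0 x))) ^ 5) ^ 5) atBot (𝓝 0) :=
    decay_general hK1 hpos
      (Fk0_tendsto hmeas hnonneg hmass ht tendsto_abs_atBot_atTop)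
  have hptF : pt t = Fk p t 0 := by
    funext x
    rw [hpt t ht x]
    show _ = ck t * ∫ y, p y * gk t 0 (x - y)
    simp only [gk_zero, ck]
  have hiter : ∀ j, j ≤ 5 → iteratedDeriv j (pt t) = Fk p t j := by
    intro j
    induction j with
    | zero => intro _; rw [iteratedDeriv_zero]; exact hptF
    | succ j ih =>
      intro hj
      rw [iteratedDeriv_succ, ih (by omega)]
      funext x
      exact (hD j (by omega) x).deriv
  -- abbreviations for bounds
  have hb : ∀ j, j ≤ 5 → ∀ x, |Fk p t j x| ≤
      Fk p t 0 x * (K * (1 + Real.sqrt (Real.log (K / Fk p t 0 x))) ^ 5) := hKb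
  refine ⟨?_, ?_, ?_, ?_, ?_, ?_⟩
  -- Case 1 : G = f1^5 / f0^4
  · rw [hiter 1 (by norm_num), hiter 2 (by norm_num), hptF]
    refine integral_deriv_eq_zero
      (G := fun x => Fk p t 1 x ^ 5 / Fk p t 0 x ^ 4) (fun x => ?_) ?_ ?_
    · have h : HasDerivAt (fun x => Fk p t 1 x ^ 5 / Fk p t 0 x ^ 4) _ x := ((hD 1 (by norm_num) x).pow 5).div ((hD 0 (by norm_num) x).pow 4)
        (pow_ne_zero _ (hne x))
      convert h using 1
      have h0 := hne x
      field_simp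
      simp only [Pi.pow_apply, Pi.mul_apply]
      ring
    · apply squeeze_zero_norm _ hdtop
      intro x
      have hpb := prod_bound (hpos x) (hφ1 x) 5 0 (hb 1 (by norm_num) x)
        (hb 2 (by norm_num) x) (by norm_num) (by norm_num)
      rw [Real.norm_eq_abs, show Fk p t 1 x ^ 5 / Fk p t 0 x ^ 4 =
        Fk p t 1 x ^ 5 * Fk p t 2 x ^ 0 / Fk p t 0 x ^ (5 + 0 - 1) by norm_num]
      exact hpb
    · apply squeeze_zero_norm _ hdbot
      intro x
      have hpb := prod_bound (hpos x) (hφ1 x) 5 0 (hb 1 (by norm_num) x)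
        (hb 2 (by norm_num) x) (by norm_num) (by norm_num)
      rw [Real.norm_eq_abs, show Fk p t 1 x ^ 5 / Fk p t 0 x ^ 4 =
        Fk p t 1 x ^ 5 * Fk p t 2 x ^ 0 / Fk p t 0 x ^ (5 + 0 - 1) by norm_num]
      exact hpb
  -- Case 2 : G = f1 * f2^2 / f0^2
  · rw [hiter 1 (by norm_num), hiter 2 (by norm_num), hiter 3 (by norm_num), hptF]
    refine integral_deriv_eq_zero
      (G := fun x => Fk p t 1 x * Fk p t 2 x ^ 2 / Fk p t 0 x ^ 2) (fun x => ?_) ?_ ?_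
    · have h : HasDerivAt (fun x => Fk p t 1 x * Fk p t 2 x ^ 2 / Fk p t 0 x ^ 2) _ x := ((hD 1 (by norm_num) x).mul ((hD 2 (by norm_num) x).pow 2)).div
        ((hD 0 (by norm_num) x).pow 2) (pow_ne_zero _ (hne x))
      convert h using 1
      have h0 := hne x
      field_simp
      simp only [Pi.pow_apply, Pi.mul_apply]
      ring
    · apply squeeze_zero_norm _ hdtop
      intro x
      have hpb := prod_bound (hpos x) (hφ1 x) 1 2 (hb 1 (by norm_num) x)
        (hb 2 (by norm_num) x) (by norm_num) (by norm_num)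
      rw [Real.norm_eq_abs, show Fk p t 1 x * Fk p t 2 x ^ 2 / Fk p t 0 x ^ 2 =
        Fk p t 1 x ^ 1 * Fk p t 2 x ^ 2 / Fk p t 0 x ^ (1 + 2 - 1) by norm_num]
      exact hpb
    · apply squeeze_zero_norm _ hdbot
      intro x
      have hpb := prod_bound (hpos x) (hφ1 x) 1 2 (hb 1 (by norm_num) x)
        (hb 2 (by norm_num) x) (by norm_num) (by norm_num)
      rw [Real.norm_eq_abs, show Fk p t 1 x * Fk p t 2 x ^ 2 / Fk p t 0 x ^ 2 =
        Fk p t 1 x ^ 1 * Fk p t 2 x ^ 2 / Fk p t 0 x ^ (1 + 2 - 1) by norm_num]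
      exact hpb
  -- Case 3 : G = f1 * f4 / f0
  · rw [hiter 1 (by norm_num), hiter 2 (by norm_num), hiter 4 (by norm_num),
      hiter 5 (by norm_num), hptF]
    refine integral_deriv_eq_zero
      (G := fun x => Fk p t 1 x * Fk p t 4 x / Fk p t 0 x) (fun x => ?_) ?_ ?_
    · have h : HasDerivAt (fun x => Fk p t 1 x * Fk p t 4 x / Fk p t 0 x) _ x := ((hD 1 (by norm_num) x).mul (hD 4 (by norm_num) x)).div
        (hD 0 (by norm_num) x) (hne x)
      convert h using 1
      have h0 := hne x
      field_simp
      simp only [Pi.pow_apply, Pi.mul_apply]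
      ring
    · apply squeeze_zero_norm _ hdtop
      intro x
      have hpb := prod_bound (hpos x) (hφ1 x) 1 1 (hb 1 (by norm_num) x)
        (hb 4 (by norm_num) x) (by norm_num) (by norm_num)
      rw [Real.norm_eq_abs, show Fk p t 1 x * Fk p t 4 x / Fk p t 0 x =
        Fk p t 1 x ^ 1 * Fk p t 4 x ^ 1 / Fk p t 0 x ^ (1 + 1 - 1) by norm_num]
      exact hpb
    · apply squeeze_zero_norm _ hdbot
      intro x
      have hpb := prod_bound (hpos x) (hφ1 x) 1 1 (hb 1 (by norm_num) x)
        (hb 4 (by norm_num) x) (by norm_num) (by norm_num)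
      rw [Real.norm_eq_abs, show Fk p t 1 x * Fk p t 4 x / Fk p t 0 x =
        Fk p t 1 x ^ 1 * Fk p t 4 x ^ 1 / Fk p t 0 x ^ (1 + 1 - 1) by norm_num]
      exact hpb
  -- Case 4 : G = f1^2 * f3 / f0^2
  · rw [hiter 1 (by norm_num), hiter 2 (by norm_num), hiter 3 (by norm_num),
      hiter 4 (by norm_num), hptF]
    refine integral_deriv_eq_zero
      (G := fun x => Fk p t 1 x ^ 2 * Fk p t 3 x / Fk p t 0 x ^ 2) (fun x => ?_) ?_ ?_
    · have h : HasDerivAt (fun x => Fk p t 1 x ^ 2 * Fk p t 3 x / Fk p t 0 x ^ 2) _ x := (((hD 1 (by norm_num) x).pow 2).mul (hD 3 (by norm_num) x)).div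
        ((hD 0 (by norm_num) x).pow 2) (pow_ne_zero _ (hne x))
      convert h using 1
      have h0 := hne x
      field_simp
      simp only [Pi.pow_apply, Pi.mul_apply]
      ring
    · apply squeeze_zero_norm _ hdtop
      intro x
      have hpb := prod_bound (hpos x) (hφ1 x) 2 1 (hb 1 (by norm_num) x)
        (hb 3 (by norm_num) x) (by norm_num) (by norm_num)
      rw [Real.norm_eq_abs, show Fk p t 1 x ^ 2 * Fk p t 3 x / Fk p t 0 x ^ 2 =
        Fk p t 1 x ^ 2 * Fk p t 3 x ^ 1 / Fk p t 0 x ^ (2 + 1 - 1) by norm_num]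
      exact hpb
    · apply squeeze_zero_norm _ hdbot
      intro x
      have hpb := prod_bound (hpos x) (hφ1 x) 2 1 (hb 1 (by norm_num) x)
        (hb 3 (by norm_num) x) (by norm_num) (by norm_num)
      rw [Real.norm_eq_abs, show Fk p t 1 x ^ 2 * Fk p t 3 x / Fk p t 0 x ^ 2 =
        Fk p t 1 x ^ 2 * Fk p t 3 x ^ 1 / Fk p t 0 x ^ (2 + 1 - 1) by norm_num]
      exact hpb
  -- Case 5 : G = f1^3 * f2 / f0^3
  · rw [hiter 1 (by norm_num), hiter 2 (by norm_num), hiter 3 (by norm_num), hptF]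
    refine integral_deriv_eq_zero
      (G := fun x => Fk p t 1 x ^ 3 * Fk p t 2 x / Fk p t 0 x ^ 3) (fun x => ?_) ?_ ?_
    · have h : HasDerivAt (fun x => Fk p t 1 x ^ 3 * Fk p t 2 x / Fk p t 0 x ^ 3) _ x := (((hD 1 (by norm_num) x).pow 3).mul (hD 2 (by norm_num) x)).div
        ((hD 0 (by norm_num) x).pow 3) (pow_ne_zero _ (hne x))
      convert h using 1
      have h0 := hne x
      field_simp
      simp only [Pi.pow_apply, Pi.mul_apply]
      ring
    · apply squeeze_zero_norm _ hdtop
      intro x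
      have hpb := prod_bound (hpos x) (hφ1 x) 3 1 (hb 1 (by norm_num) x)
        (hb 2 (by norm_num) x) (by norm_num) (by norm_num)
      rw [Real.norm_eq_abs, show Fk p t 1 x ^ 3 * Fk p t 2 x / Fk p t 0 x ^ 3 =
        Fk p t 1 x ^ 3 * Fk p t 2 x ^ 1 / Fk p t 0 x ^ (3 + 1 - 1) by norm_num]
      exact hpb
    · apply squeeze_zero_norm _ hdbot
      intro x
      have hpb := prod_bound (hpos x) (hφ1 x) 3 1 (hb 1 (by norm_num) x)
        (hb 2 (by norm_num) x) (by norm_num) (by norm_num)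
      rw [Real.norm_eq_abs, show Fk p t 1 x ^ 3 * Fk p t 2 x / Fk p t 0 x ^ 3 =
        Fk p t 1 x ^ 3 * Fk p t 2 x ^ 1 / Fk p t 0 x ^ (3 + 1 - 1) by norm_num]
      exact hpb
  -- Case 6 : G = f2 * f3 / f0
  · rw [hiter 1 (by norm_num), hiter 2 (by norm_num), hiter 3 (by norm_num),
      hiter 4 (by norm_num), hptF]
    refine integral_deriv_eq_zero
      (G := fun x => Fk p t 2 x * Fk p t 3 x / Fk p t 0 x) (fun x => ?_) ?_ ?_
    · have h : HasDerivAt (fun x => Fk p t 2 x * Fk p t 3 x / Fk p t 0 x) _ x := ((hD 2 (by norm_num) x).mul (hD 3 (by norm_num) x)).div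
        (hD 0 (by norm_num) x) (hne x)
      convert h using 1
      have h0 := hne x
      field_simp
      simp only [Pi.pow_apply, Pi.mul_apply]
      ring
    · apply squeeze_zero_norm _ hdtop
      intro x
      have hpb := prod_bound (hpos x) (hφ1 x) 1 1 (hb 2 (by norm_num) x)
        (hb 3 (by norm_num) x) (by norm_num) (by norm_num)
      rw [Real.norm_eq_abs, show Fk p t 2 x * Fk p t 3 x / Fk p t 0 x =
        Fk p t 2 x ^ 1 * Fk p t 3 x ^ 1 / Fk p t 0 x ^ (1 + 1 - 1) by norm_num]
      exact hpb
    · apply squeeze_zero_norm _ hdbot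
      intro x
      have hpb := prod_bound (hpos x) (hφ1 x) 1 1 (hb 2 (by norm_num) x)
        (hb 3 (by norm_num) x) (by norm_num) (by norm_num)
      rw [Real.norm_eq_abs, show Fk p t 2 x * Fk p t 3 x / Fk p t 0 x =
        Fk p t 2 x ^ 1 * Fk p t 3 x ^ 1 / Fk p t 0 x ^ (1 + 1 - 1) by norm_num]
      exact hpb
end

section
/- (Sum-of-squares certificate for D(3,1).) There exist real numbers p₁, p₂ and a function S : ℝ³ → ℝ which is a finite sum of squares of linear forms in (m₁, m₂, m₃), such that for all real m₁, m₂, m₃: (1/2)·m₁² − m₁·m₂ − (1/2)·m₂² + (3/5)·m₃² = p₁·(5·m₂·m₃ − 4·m₃²) + p₂·(m₁·m₃ + 3·m₂² − (12/5)·m₃²) + S(m₁, m₂, m₃). -/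
/-- Sum-of-squares certificate for D(3,1): there are reals `p₁, p₂` and a finite
sum of squares of linear forms `S` such that
`(1/2)m₁² − m₁m₂ − (1/2)m₂² + (3/5)m₃² = p₁R₁ + p₂R₂ + S(m₁,m₂,m₃)`. -/
theorem sos_certificate_D31 :
    ∃ (p₁ p₂ : ℝ) (k : ℕ) (a b c : Fin k → ℝ),
      ∀ m₁ m₂ m₃ : ℝ,
        (1 / 2) * m₁ ^ 2 - m₁ * m₂ - (1 / 2) * m₂ ^ 2 + (3 / 5) * m₃ ^ 2 =
          p₁ * (5 * m₂ * m₃ - 4 * m₃ ^ 2) +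
          p₂ * (m₁ * m₃ + 3 * m₂ ^ 2 - (12 / 5) * m₃ ^ 2) +
          ∑ i, (a i * m₁ + b i * m₂ + c i * m₃) ^ 2 := by
  set r1 : ℝ := Real.sqrt (1/2)
  set r2 : ℝ := Real.sqrt (1/5)
  set r3 : ℝ := Real.sqrt (11/1600)
  have h1 : r1 ^ 2 = 1/2 := Real.sq_sqrt (by norm_num)
  have h2 : r2 ^ 2 = 1/5 := Real.sq_sqrt (by norm_num)
  have h3 : r3 ^ 2 = 11/1600 := Real.sq_sqrt (by norm_num)
  refine ⟨3/20, -2/5, 3, ![r1, 0, 0], ![-r1, r2, 0],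
    ![(2/5)*r1, -(7/8)*r2, r3], fun m₁ m₂ m₃ => ?_⟩
  rw [Fin.sum_univ_three]
  simp only [Matrix.cons_val_zero, Matrix.cons_val_one, Matrix.head_cons,
    Matrix.cons_val_two, Matrix.tail_cons]
  have e1 : (r1 * m₁ + -r1 * m₂ + (2/5)*r1 * m₃) ^ 2
      = (1/2) * (m₁ - m₂ + (2/5)*m₃) ^ 2 := by
    have : r1 * m₁ + -r1 * m₂ + (2/5)*r1 * m₃ = r1 * (m₁ - m₂ + (2/5)*m₃) := by
      ring
    rw [this, mul_pow, h1]
  have e2 : ((0:ℝ) * m₁ + r2 * m₂ + -(7/8)*r2 * m₃) ^ 2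
      = (1/5) * (m₂ - (7/8)*m₃) ^ 2 := by
    have : (0:ℝ) * m₁ + r2 * m₂ + -(7/8)*r2 * m₃ = r2 * (m₂ - (7/8)*m₃) := by
      ring
    rw [this, mul_pow, h2]
  have e3 : ((0:ℝ) * m₁ + 0 * m₂ + r3 * m₃) ^ 2 = (11/1600) * m₃ ^ 2 := by
    have : (0:ℝ) * m₁ + 0 * m₂ + r3 * m₃ = r3 * m₃ := by ring
    rw [this, mul_pow, h3]
  rw [e1, e2, e3]
  ring
end

section
/- (Finiteness of derivative-ratio moments of the smoothed density.) In the Gaussian-smoothing setup, fix t > 0, an integer r ≥ 1, multi-indices α₁,…,α_r ∈ ℕⁿ, and positive integers k₁,…,k_r. Then the integral ∫_{ℝⁿ} p_t(x) · Π_{i=1}^{r} | ∂^{α_i} p_t(x) / p_t(x) |^{k_i} dx is finite, where ∂^{α} denotes the spatial partial derivative of order α of the map x ↦ p_t(x). -/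
set_option synthInstance.maxHeartbeats 1000000
set_option maxHeartbeats 1000000

open MeasureTheory Real

/-- Partial derivative of a scalar function on `ℝⁿ` in the `i`-th coordinate
direction. -/
noncomputable def coordPDeriv (n : ℕ) (i : Fin n)
    (g : EuclideanSpace ℝ (Fin n) → ℝ) (x : EuclideanSpace ℝ (Fin n)) : ℝ :=
  fderiv ℝ g x (EuclideanSpace.single i 1)

/-- Iterated partial derivative `∂^α` for a multi-index `α ∈ ℕⁿ`: the `i`-th
coordinate derivative is applied `α i` times, for each coordinate `i`. -/
noncomputable def multiPDeriv (n : ℕ) (α : Fin n → ℕ)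
    (g : EuclideanSpace ℝ (Fin n) → ℝ) : EuclideanSpace ℝ (Fin n) → ℝ :=
  (List.finRange n).foldr (fun i h => (coordPDeriv n i)^[α i] h) g

inductive GPoly (n : ℕ) : (EuclideanSpace ℝ (Fin n) → ℝ) → Prop
  | const (c : ℝ) : GPoly n (fun _ => c)
  | coord (i : Fin n) : GPoly n (fun z => z i)
  | add {f g} : GPoly n f → GPoly n g → GPoly n (fun z => f z + g z)
  | mul {f g} : GPoly n f → GPoly n g → GPoly n (fun z => f z * g z)

lemma GPoly.differentiable {n : ℕ} {f : EuclideanSpace ℝ (Fin n) → ℝ}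
    (hf : GPoly n f) : Differentiable ℝ f := by
  induction hf with
  | const c => exact differentiable_const c
  | coord i => exact (EuclideanSpace.proj (𝕜 := ℝ) i).differentiable
  | add hf hg ihf ihg => exact ihf.add ihg
  | mul hf hg ihf ihg => exact ihf.mul ihg

lemma GPoly.fderiv_eq {n : ℕ} {f : EuclideanSpace ℝ (Fin n) → ℝ}
    (hf : GPoly n f) (i : Fin n) :
    ∃ g, GPoly n g ∧ ∀ z, fderiv ℝ f z (EuclideanSpace.single i 1) = g z := by
  induction hf with
  | const c =>
      exact ⟨fun _ => 0, .const 0, fun z => by simp⟩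
  | coord j =>
      refine ⟨fun _ => if (j:Fin n) = i then 1 else 0, ?_, fun z => ?_⟩
      · split <;> exact .const _
      · have h : fderiv ℝ (fun z : EuclideanSpace ℝ (Fin n) => z j) z
            = EuclideanSpace.proj (𝕜 := ℝ) j :=
          (EuclideanSpace.proj (𝕜 := ℝ) j).fderiv
        rw [h]
        have h2 : (EuclideanSpace.proj (𝕜 := ℝ) j) (EuclideanSpace.single i (1:ℝ))
            = (EuclideanSpace.single i (1:ℝ)) j := rfl
        rw [h2, EuclideanSpace.single_apply]
  | @add f g hf hg ihf ihg =>
      obtain ⟨f', hf', hfe⟩ := ihf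
      obtain ⟨g', hg', hge⟩ := ihg
      refine ⟨fun z => f' z + g' z, .add hf' hg', fun z => ?_⟩
      rw [fderiv_fun_add (hf.differentiable z) (hg.differentiable z)]
      simp [hfe z, hge z]
  | @mul f g hf hg ihf ihg =>
      obtain ⟨f', hf', hfe⟩ := ihf
      obtain ⟨g', hg', hge⟩ := ihg
      refine ⟨fun z => f z * g' z + g z * f' z, .add (.mul hf hg') (.mul hg hf'), fun z => ?_⟩
      rw [fderiv_fun_mul (hf.differentiable z) (hg.differentiable z)]
      simp [hfe z, hge z]

lemma GPoly.bound {n : ℕ} {f : EuclideanSpace ℝ (Fin n) → ℝ}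
    (hf : GPoly n f) : ∃ C m, 0 ≤ C ∧ ∀ z, |f z| ≤ C * (1 + ‖z‖) ^ m := by
  induction hf with
  | const c => exact ⟨|c|, 0, abs_nonneg c, fun z => by simp⟩
  | coord i =>
      refine ⟨1, 1, zero_le_one, fun z => ?_⟩
      have h1 : |z i| ≤ ‖z‖ := by
        rw [EuclideanSpace.norm_eq]
        rw [← Real.sqrt_sq_eq_abs]
        apply Real.sqrt_le_sqrt
        have h0 := Finset.single_le_sum (f := fun j => (z j) ^ 2)
          (fun j _ => sq_nonneg (z j)) (Finset.mem_univ i)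
        simpa [Real.norm_eq_abs, sq_abs] using h0
      calc |z i| ≤ ‖z‖ := h1
        _ ≤ 1 + ‖z‖ := by linarith
        _ = 1 * (1 + ‖z‖) ^ 1 := by ring
  | @add f g hf hg ihf ihg =>
      obtain ⟨C1, m1, hC1, h1⟩ := ihf
      obtain ⟨C2, m2, hC2, h2⟩ := ihg
      refine ⟨C1 + C2, max m1 m2, add_nonneg hC1 hC2, fun z => ?_⟩
      have hz : (1:ℝ) ≤ 1 + ‖z‖ := by simpa using norm_nonneg z
      have e1 : (1 + ‖z‖) ^ m1 ≤ (1 + ‖z‖) ^ (max m1 m2) :=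
        pow_le_pow_right₀ hz (le_max_left _ _)
      have e2 : (1 + ‖z‖) ^ m2 ≤ (1 + ‖z‖) ^ (max m1 m2) :=
        pow_le_pow_right₀ hz (le_max_right _ _)
      calc |f z + g z| ≤ |f z| + |g z| := abs_add_le _ _
        _ ≤ C1 * (1 + ‖z‖) ^ (max m1 m2) + C2 * (1 + ‖z‖) ^ (max m1 m2) :=
            add_le_add ((h1 z).trans (mul_le_mul_of_nonneg_left e1 hC1))
              ((h2 z).trans (mul_le_mul_of_nonneg_left e2 hC2))
        _ = (C1 + C2) * (1 + ‖z‖) ^ (max m1 m2) := by ring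
  | @mul f g hf hg ihf ihg =>
      obtain ⟨C1, m1, hC1, h1⟩ := ihf
      obtain ⟨C2, m2, hC2, h2⟩ := ihg
      refine ⟨C1 * C2, m1 + m2, mul_nonneg hC1 hC2, fun z => ?_⟩
      rw [abs_mul, pow_add]
      calc |f z| * |g z| ≤ (C1 * (1 + ‖z‖) ^ m1) * (C2 * (1 + ‖z‖) ^ m2) := by
            apply mul_le_mul (h1 z) (h2 z) (abs_nonneg _) (by positivity)
        _ = C1 * C2 * ((1 + ‖z‖) ^ m1 * (1 + ‖z‖) ^ m2) := by ring

lemma poly_gauss_bound (m : ℕ) {a : ℝ} (ha : 0 < a) :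
    ∃ B, 0 ≤ B ∧ ∀ s : ℝ, 0 ≤ s → (1 + s) ^ m * Real.exp (-(a * s ^ 2)) ≤ B := by
  refine ⟨2 ^ m * max 1 ((m.factorial : ℝ) / a ^ m), by positivity, fun s hs => ?_⟩
  rcases le_or_gt s 1 with hs1 | hs1
  · have h1 : (1 + s) ^ m ≤ 2 ^ m := pow_le_pow_left₀ (by linarith) (by linarith) m
    have h2 : Real.exp (-(a * s ^ 2)) ≤ 1 := Real.exp_le_one_iff.mpr (by nlinarith)
    calc (1 + s) ^ m * Real.exp (-(a * s ^ 2)) ≤ 2 ^ m * 1 :=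
          mul_le_mul h1 h2 (Real.exp_pos _).le (by positivity)
      _ ≤ 2 ^ m * max 1 ((m.factorial : ℝ) / a ^ m) := by
          gcongr; exact le_max_left _ _
  · set x := a * s ^ 2 with hx
    have hxpos : 0 < x := by positivity
    have hexp : x ^ m / (m.factorial : ℝ) ≤ Real.exp x := by
      have h1 : x ^ m / (m.factorial : ℝ)
          ≤ ∑ i ∈ Finset.range (m + 1), x ^ i / (i.factorial : ℝ) :=
        Finset.single_le_sum (f := fun i => x ^ i / (i.factorial : ℝ))
          (fun i _ => by positivity) (Finset.self_mem_range_succ m)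
      exact h1.trans (Real.sum_le_exp_of_nonneg hxpos.le (m + 1))
    have hinv : Real.exp (-x) ≤ (m.factorial : ℝ) / x ^ m := by
      rw [Real.exp_neg]
      have hpos : (0:ℝ) < x ^ m / (m.factorial : ℝ) := by positivity
      have := inv_anti₀ hpos hexp
      rwa [inv_div] at this
    have hstep : (1 + s) ^ m * Real.exp (-x) ≤ (2 * s) ^ m * ((m.factorial : ℝ) / x ^ m) := by
      apply mul_le_mul (pow_le_pow_left₀ (by linarith) (by linarith) m) hinv
        (Real.exp_pos _).le (by positivity)
    have hs0 : (0:ℝ) < s := by linarith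
    have heq : (2 * s) ^ m * ((m.factorial : ℝ) / x ^ m)
        = 2 ^ m * ((m.factorial : ℝ) / a ^ m) * (1 / s ^ m) := by
      rw [hx]
      field_simp
      ring
    have hfin : (2 * s) ^ m * ((m.factorial : ℝ) / x ^ m)
        ≤ 2 ^ m * ((m.factorial : ℝ) / a ^ m) := by
      rw [heq]
      have h1s : 1 / s ^ m ≤ 1 := by
        rw [div_le_one (by positivity)]
        exact one_le_pow₀ hs1.le
      exact mul_le_of_le_one_right (by positivity) h1s
    calc (1 + s) ^ m * Real.exp (-x) ≤ 2 ^ m * ((m.factorial : ℝ) / a ^ m) :=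
          hstep.trans hfin
      _ ≤ 2 ^ m * max 1 ((m.factorial : ℝ) / a ^ m) := by gcongr; exact le_max_right _ _

lemma integrable_gauss (n : ℕ) {a : ℝ} (ha : 0 < a) :
    Integrable (fun z : EuclideanSpace ℝ (Fin n) => Real.exp (-(a * ‖z‖ ^ 2))) := by
  have h := (GaussianFourier.integrable_cexp_neg_mul_sq_norm_add
    (V := EuclideanSpace ℝ (Fin n)) (b := (a : ℂ)) (by simpa using ha) 0 0).norm
  refine h.congr (Filter.Eventually.of_forall fun z => ?_)
  simp only [Complex.norm_exp]
  congr 1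
  simp [Complex.add_re, Complex.mul_re]
  left
  norm_cast

lemma gauss_global_bound (n M : ℕ) {t : ℝ} (ht : 0 < t) :
    ∃ B, 0 ≤ B ∧ ∀ z : EuclideanSpace ℝ (Fin n),
      (1 + ‖z‖) ^ M * Real.exp (-‖z‖ ^ 2 / (2 * t)) ≤ B := by
  obtain ⟨B, hB0, hB⟩ := poly_gauss_bound M (a := 1 / (2 * t)) (by positivity)
  refine ⟨B, hB0, fun z => ?_⟩
  have : -‖z‖ ^ 2 / (2 * t) = -(1 / (2 * t) * ‖z‖ ^ 2) := by ring
  rw [this]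
  exact hB ‖z‖ (norm_nonneg z)

lemma gauss_decay (n M : ℕ) {t : ℝ} (ht : 0 < t) :
    ∃ B, 0 ≤ B ∧ ∀ z : EuclideanSpace ℝ (Fin n),
      (1 + ‖z‖) ^ M * Real.exp (-‖z‖ ^ 2 / (2 * t))
        ≤ B * Real.exp (-(1 / (4 * t) * ‖z‖ ^ 2)) := by
  obtain ⟨B, hB0, hB⟩ := poly_gauss_bound M (a := 1 / (4 * t)) (by positivity)
  refine ⟨B, hB0, fun z => ?_⟩
  have : -‖z‖ ^ 2 / (2 * t)
      = -(1 / (4 * t) * ‖z‖ ^ 2) + -(1 / (4 * t) * ‖z‖ ^ 2) := by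
    field_simp; ring
  rw [this, Real.exp_add, ← mul_assoc]
  exact mul_le_mul_of_nonneg_right (hB ‖z‖ (norm_nonneg z)) (Real.exp_pos _).le

lemma integrable_poly_gauss (n M : ℕ) {t : ℝ} (ht : 0 < t) :
    Integrable (fun z : EuclideanSpace ℝ (Fin n) =>
      (1 + ‖z‖) ^ M * Real.exp (-‖z‖ ^ 2 / (2 * t))) := by
  obtain ⟨B, hB0, hB⟩ := gauss_decay n M ht
  refine Integrable.mono' ((integrable_gauss n (a := 1 / (4 * t)) (by positivity)).const_mul B)
    ?_ (Filter.Eventually.of_forall fun z => ?_)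
  · exact (Continuous.aestronglyMeasurable (by continuity))
  · rw [Real.norm_eq_abs, abs_of_nonneg (by positivity)]
    exact hB z

/-- Pointwise power-mean (Hölder) inequality for integrals. -/
lemma integral_mul_pow_le {Y : Type*} [MeasurableSpace Y] (μ : Measure Y)
    (f φ : Y → ℝ) (hf0 : ∀ y, 0 ≤ f y) (hφ0 : ∀ y, 0 ≤ φ y)
    (hfm : AEMeasurable f μ) (hφm : AEMeasurable φ μ)
    (hfi : Integrable f μ) (hfφ : Integrable (fun y => f y * φ y) μ)
    (hfφK : Integrable (fun y => f y * φ y ^ K) μ) (hK : 1 ≤ K) :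
    (∫ y, f y * φ y ∂μ) ^ K ≤ (∫ y, f y ∂μ) ^ (K - 1) * ∫ y, f y * φ y ^ K ∂μ := by
  set A := ∫⁻ y, ENNReal.ofReal (f y * φ y) ∂μ with hA
  set G := ∫⁻ y, ENNReal.ofReal (f y) ∂μ with hG
  set B := ∫⁻ y, ENNReal.ofReal (f y * φ y ^ K) ∂μ with hB
  have oA : ENNReal.ofReal (∫ y, f y * φ y ∂μ) = A :=
    ofReal_integral_eq_lintegral_ofReal hfφ
      (Filter.Eventually.of_forall fun y => mul_nonneg (hf0 y) (hφ0 y))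
  have oG : ENNReal.ofReal (∫ y, f y ∂μ) = G :=
    ofReal_integral_eq_lintegral_ofReal hfi (Filter.Eventually.of_forall hf0)
  have oB : ENNReal.ofReal (∫ y, f y * φ y ^ K ∂μ) = B :=
    ofReal_integral_eq_lintegral_ofReal hfφK
      (Filter.Eventually.of_forall fun y => mul_nonneg (hf0 y) (pow_nonneg (hφ0 y) K))
  have key : A ^ K ≤ G ^ (K - 1) * B := by
    rcases eq_or_lt_of_le hK with h1 | h2
    · have hAB : A = B := by
        rw [hA, hB, ← h1]
        simp [pow_one]
      rw [← h1, hAB]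
      simp
    · have hK2 : (1:ℝ) < (K:ℝ) := by exact_mod_cast h2
      have hKne : (K:ℝ) ≠ 0 := by positivity
      have hK1ne : (K:ℝ) - 1 ≠ 0 := by linarith
      have hKpos : (0:ℝ) < (K:ℝ) := by linarith
      have conj : ((K:ℝ)).HolderConjugate ((K:ℝ) / ((K:ℝ) - 1)) :=
        Real.HolderConjugate.conjExponent hK2
      set g1 : Y → ENNReal := fun y =>
        (ENNReal.ofReal (f y)) ^ ((1:ℝ)/(K:ℝ)) * ENNReal.ofReal (φ y) with hg1
      set g2 : Y → ENNReal := fun y => (ENNReal.ofReal (f y)) ^ (1 - (1:ℝ)/(K:ℝ)) with hg2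
      have hm1 : AEMeasurable g1 μ :=
        (hfm.ennreal_ofReal.pow_const _).mul hφm.ennreal_ofReal
      have hm2 : AEMeasurable g2 μ := hfm.ennreal_ofReal.pow_const _
      have h := ENNReal.lintegral_mul_le_Lp_mul_Lq μ conj hm1 hm2
      have e1 : ∀ y, g1 y * g2 y = ENNReal.ofReal (f y * φ y) := by
        intro y
        rw [hg1, hg2]
        dsimp only
        rw [mul_right_comm, ← ENNReal.rpow_add_of_nonneg _ _ (by positivity)
          (by rw [sub_nonneg, div_le_one hKpos]; exact_mod_cast hK)]
        rw [add_sub_cancel, ENNReal.rpow_one, ← ENNReal.ofReal_mul (hf0 y)]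
      have e2 : ∀ y, g1 y ^ (K:ℝ) = ENNReal.ofReal (f y * φ y ^ K) := by
        intro y
        rw [hg1]
        dsimp only
        rw [ENNReal.mul_rpow_of_nonneg _ _ (by positivity), ← ENNReal.rpow_mul,
          one_div_mul_cancel hKne, ENNReal.rpow_one, ENNReal.rpow_natCast,
          ← ENNReal.ofReal_pow (hφ0 y), ← ENNReal.ofReal_mul (hf0 y)]
      have e3 : ∀ y, g2 y ^ ((K:ℝ)/((K:ℝ)-1)) = ENNReal.ofReal (f y) := by
        intro y
        rw [hg2]
        dsimp only
        rw [← ENNReal.rpow_mul]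
        have : (1 - (1:ℝ)/(K:ℝ)) * ((K:ℝ)/((K:ℝ)-1)) = 1 := by
          field_simp
        rw [this, ENNReal.rpow_one]
      have hALe : A ≤ B ^ ((1:ℝ)/(K:ℝ)) * G ^ (((K:ℝ)-1)/(K:ℝ)) := by
        calc A = ∫⁻ y, g1 y * g2 y ∂μ := by
              rw [hA]; exact (lintegral_congr fun y => (e1 y).symm)
          _ ≤ (∫⁻ y, g1 y ^ (K:ℝ) ∂μ) ^ ((1:ℝ)/(K:ℝ))
              * (∫⁻ y, g2 y ^ ((K:ℝ)/((K:ℝ)-1)) ∂μ) ^ ((1:ℝ)/((K:ℝ)/((K:ℝ)-1))) := h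
          _ = B ^ ((1:ℝ)/(K:ℝ)) * G ^ (((K:ℝ)-1)/(K:ℝ)) := by
              rw [lintegral_congr e2, lintegral_congr e3, one_div_div]
      calc A ^ K = (A ^ ((K:ℝ)))  := (ENNReal.rpow_natCast A K).symm
        _ ≤ (B ^ ((1:ℝ)/(K:ℝ)) * G ^ (((K:ℝ)-1)/(K:ℝ))) ^ ((K:ℝ)) :=
            ENNReal.rpow_le_rpow hALe (by positivity)
        _ = B * G ^ (K - 1) := by
            rw [ENNReal.mul_rpow_of_nonneg _ _ (by positivity), ← ENNReal.rpow_mul,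
              ← ENNReal.rpow_mul, one_div_mul_cancel hKne, ENNReal.rpow_one,
              div_mul_cancel₀ _ hKne]
            congr 1
            rw [← ENNReal.rpow_natCast G (K-1)]
            congr 1
            have : ((K - 1 : ℕ) : ℝ) = (K:ℝ) - 1 := by
              have := Nat.cast_sub hK (R := ℝ); simpa using this
            rw [this]
        _ = G ^ (K - 1) * B := mul_comm _ _
  have hRHS : 0 ≤ (∫ y, f y ∂μ) ^ (K - 1) * ∫ y, f y * φ y ^ K ∂μ := by
    apply mul_nonneg
    · apply pow_nonneg
      exact integral_nonneg hf0
    · exact integral_nonneg fun y => mul_nonneg (hf0 y) (pow_nonneg (hφ0 y) K)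
  rw [← ENNReal.ofReal_le_ofReal_iff hRHS, ENNReal.ofReal_pow
    (integral_nonneg fun y => mul_nonneg (hf0 y) (hφ0 y)), oA,
    ENNReal.ofReal_mul (pow_nonneg (integral_nonneg hf0) _),
    ENNReal.ofReal_pow (integral_nonneg hf0), oG, oB]
  exact key

lemma euclid_abs_coord_le {n : ℕ} (z : EuclideanSpace ℝ (Fin n)) (i : Fin n) :
    |z i| ≤ ‖z‖ := by
  rw [EuclideanSpace.norm_eq, ← Real.sqrt_sq_eq_abs]
  apply Real.sqrt_le_sqrt
  have h0 := Finset.single_le_sum (f := fun j => (z j) ^ 2)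
    (fun j _ => sq_nonneg (z j)) (Finset.mem_univ i)
  simpa [Real.norm_eq_abs, sq_abs] using h0

lemma euclid_norm_sq_eq {n : ℕ} (z : EuclideanSpace ℝ (Fin n)) :
    ‖z‖ ^ 2 = ∑ i, z i ^ 2 := by
  rw [EuclideanSpace.norm_eq, Real.sq_sqrt (by positivity)]
  simp [Real.norm_eq_abs, sq_abs]

lemma opnorm_le_sum {n : ℕ} (L : EuclideanSpace ℝ (Fin n) →L[ℝ] ℝ) :
    ‖L‖ ≤ ∑ i, |L (EuclideanSpace.single i 1)| := by
  apply ContinuousLinearMap.opNorm_le_bound _ (Finset.sum_nonneg fun i _ => abs_nonneg _)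
  intro v
  have hv : ∑ i, v i • EuclideanSpace.single i (1:ℝ) = v := by
    have h := (EuclideanSpace.basisFun (Fin n) ℝ).sum_repr v
    simpa [EuclideanSpace.basisFun_apply, EuclideanSpace.basisFun_repr] using h
  calc ‖L v‖ = |∑ i, v i * L (EuclideanSpace.single i 1)| := by
        rw [Real.norm_eq_abs]
        congr 1
        conv_lhs => rw [← hv]
        rw [map_sum]
        simp only [_root_.map_smul, smul_eq_mul]
    _ ≤ ∑ i, |v i * L (EuclideanSpace.single i 1)| := Finset.abs_sum_le_sum_abs _ _
    _ ≤ ∑ i, ‖v‖ * |L (EuclideanSpace.single i 1)| := by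
        apply Finset.sum_le_sum
        intro i _
        rw [abs_mul]
        exact mul_le_mul_of_nonneg_right (euclid_abs_coord_le v i) (abs_nonneg _)
    _ = (∑ i, |L (EuclideanSpace.single i 1)|) * ‖v‖ := by
        rw [← Finset.mul_sum, mul_comm]

noncomputable def gker (n : ℕ) (t : ℝ) (q : EuclideanSpace ℝ (Fin n) → ℝ) :
    EuclideanSpace ℝ (Fin n) → ℝ :=
  fun z => q z * Real.exp (-‖z‖ ^ 2 / (2 * t))

lemma gsq_poly (n : ℕ) : GPoly n (fun z => ∑ i, z i ^ 2) := by
  classical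
  have h : ∀ s : Finset (Fin n), GPoly n (fun z => ∑ i ∈ s, z i ^ 2) := by
    intro s
    induction s using Finset.induction_on with
    | empty => simpa using GPoly.const 0
    | insert a s' hne ih =>
        have : (fun z : EuclideanSpace ℝ (Fin n) => ∑ i ∈ insert a s', z i ^ 2)
            = fun z => (z a * z a) + ∑ i ∈ s', z i ^ 2 := by
          funext z
          rw [Finset.sum_insert hne]
          ring
        rw [this]
        exact GPoly.add (GPoly.mul (GPoly.coord a) (GPoly.coord a)) ih
  exact h Finset.univ

lemma gexp_arg_poly (n : ℕ) {t : ℝ} (ht : 0 < t) :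
    GPoly n (fun z : EuclideanSpace ℝ (Fin n) => -‖z‖ ^ 2 / (2 * t)) := by
  have : (fun z : EuclideanSpace ℝ (Fin n) => -‖z‖ ^ 2 / (2 * t))
      = fun z => (-(1:ℝ)/(2*t)) * ∑ i, z i ^ 2 := by
    funext z
    rw [euclid_norm_sq_eq]
    ring
  rw [this]
  exact GPoly.mul (GPoly.const _) (gsq_poly n)

lemma gker_hasFDerivAt {n : ℕ} {t : ℝ} (ht : 0 < t)
    {q : EuclideanSpace ℝ (Fin n) → ℝ} (hq : GPoly n q) (z : EuclideanSpace ℝ (Fin n)) :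
    HasFDerivAt (gker n t q)
      (q z • (Real.exp (-‖z‖ ^ 2 / (2 * t)) •
          fderiv ℝ (fun w : EuclideanSpace ℝ (Fin n) => -‖w‖ ^ 2 / (2 * t)) z)
        + Real.exp (-‖z‖ ^ 2 / (2 * t)) • fderiv ℝ q z) z := by
  have hg := gexp_arg_poly n (t := t) ht
  have hgd := hg.differentiable z
  have he : HasFDerivAt (fun w : EuclideanSpace ℝ (Fin n) => Real.exp (-‖w‖ ^ 2 / (2 * t)))
      (Real.exp (-‖z‖ ^ 2 / (2 * t)) •
        fderiv ℝ (fun w : EuclideanSpace ℝ (Fin n) => -‖w‖ ^ 2 / (2 * t)) z) z :=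
    hgd.hasFDerivAt.exp
  exact (hq.differentiable z).hasFDerivAt.mul he

lemma gker_differentiable {n : ℕ} {t : ℝ} (ht : 0 < t)
    {q : EuclideanSpace ℝ (Fin n) → ℝ} (hq : GPoly n q) :
    Differentiable ℝ (gker n t q) :=
  fun z => (gker_hasFDerivAt ht hq z).differentiableAt

lemma gker_fderiv_apply {n : ℕ} {t : ℝ} (ht : 0 < t)
    {q : EuclideanSpace ℝ (Fin n) → ℝ} (hq : GPoly n q) (i : Fin n) :
    ∃ q', GPoly n q' ∧ ∀ z,
      fderiv ℝ (gker n t q) z (EuclideanSpace.single i 1) = gker n t q' z := by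
  obtain ⟨q1, hq1, hq1e⟩ := hq.fderiv_eq i
  obtain ⟨g1, hg1, hg1e⟩ := (gexp_arg_poly n (t := t) ht).fderiv_eq i
  refine ⟨fun z => q z * g1 z + q1 z, GPoly.add (GPoly.mul hq hg1) hq1, fun z => ?_⟩
  rw [(gker_hasFDerivAt ht hq z).fderiv]
  simp only [ContinuousLinearMap.add_apply, ContinuousLinearMap.smul_apply, smul_eq_mul]
  rw [hq1e z, hg1e z]
  unfold gker
  ring

lemma gker_bound {n : ℕ} {t : ℝ} (ht : 0 < t)
    {q : EuclideanSpace ℝ (Fin n) → ℝ} (hq : GPoly n q) :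
    ∃ B, 0 ≤ B ∧ ∀ z, |gker n t q z| ≤ B := by
  obtain ⟨C, m, hC, hCb⟩ := hq.bound
  obtain ⟨B, hB0, hB⟩ := gauss_global_bound n m ht
  refine ⟨C * B, by positivity, fun z => ?_⟩
  unfold gker
  rw [abs_mul, abs_of_pos (Real.exp_pos _)]
  calc |q z| * Real.exp (-‖z‖ ^ 2 / (2 * t))
      ≤ (C * (1 + ‖z‖) ^ m) * Real.exp (-‖z‖ ^ 2 / (2 * t)) :=
        mul_le_mul_of_nonneg_right (hCb z) (Real.exp_pos _).le
    _ = C * ((1 + ‖z‖) ^ m * Real.exp (-‖z‖ ^ 2 / (2 * t))) := by ring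
    _ ≤ C * B := mul_le_mul_of_nonneg_left (hB z) hC

lemma gker_fderiv_bound {n : ℕ} {t : ℝ} (ht : 0 < t)
    {q : EuclideanSpace ℝ (Fin n) → ℝ} (hq : GPoly n q) :
    ∃ B, 0 ≤ B ∧ ∀ z, ‖fderiv ℝ (gker n t q) z‖ ≤ B := by
  classical
  have h : ∀ i : Fin n, ∃ B, 0 ≤ B ∧ ∀ z,
      |fderiv ℝ (gker n t q) z (EuclideanSpace.single i 1)| ≤ B := by
    intro i
    obtain ⟨q', hq', hq'e⟩ := gker_fderiv_apply ht hq i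
    obtain ⟨B, hB0, hB⟩ := gker_bound ht hq'
    exact ⟨B, hB0, fun z => by rw [hq'e z]; exact hB z⟩
  choose Bs hBs0 hBs using h
  refine ⟨∑ i, Bs i, Finset.sum_nonneg fun i _ => hBs0 i, fun z => ?_⟩
  exact (opnorm_le_sum _).trans (Finset.sum_le_sum fun i _ => hBs i z)

noncomputable def gconv (n : ℕ) (p : EuclideanSpace ℝ (Fin n) → ℝ) (t : ℝ)
    (q : EuclideanSpace ℝ (Fin n) → ℝ) : EuclideanSpace ℝ (Fin n) → ℝ :=
  fun x => ∫ y, p y * gker n t q (x - y)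

section Conv

variable {n : ℕ} {p : EuclideanSpace ℝ (Fin n) → ℝ} {t : ℝ}

lemma gconv_integrand_integrable (hmeas : Measurable p) (hnonneg : ∀ y, 0 ≤ p y) (hpint : Integrable p) (ht : 0 < t)
    {q : EuclideanSpace ℝ (Fin n) → ℝ} (hq : GPoly n q)
    (x : EuclideanSpace ℝ (Fin n)) :
    Integrable (fun y => p y * gker n t q (x - y)) := by
  obtain ⟨B, hB0, hB⟩ := gker_bound ht hq
  refine Integrable.mono' (hpint.const_mul B) ?_ (Filter.Eventually.of_forall fun y => ?_)
  · exact (hmeas.mul (((gker_differentiable ht hq).continuous.measurable).comp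
      (measurable_const.sub measurable_id))).aestronglyMeasurable
  · rw [Real.norm_eq_abs, abs_mul, abs_of_nonneg (hnonneg y)]
    exact (mul_le_mul_of_nonneg_left (hB _) (hnonneg y)).trans_eq (mul_comm _ _)

lemma gconv_fderiv_integrand_integrable (hmeas : Measurable p) (hnonneg : ∀ y, 0 ≤ p y) (hpint : Integrable p) (ht : 0 < t)
    {q : EuclideanSpace ℝ (Fin n) → ℝ}
    (hq : GPoly n q) (x : EuclideanSpace ℝ (Fin n)) :
    Integrable (fun y => p y • fderiv ℝ (gker n t q) (x - y)) := by
  obtain ⟨B, hB0, hB⟩ := gker_fderiv_bound ht hq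
  refine Integrable.mono' (hpint.const_mul B) ?_ (Filter.Eventually.of_forall fun y => ?_)
  · exact (hmeas.smul ((measurable_fderiv ℝ (gker n t q)).comp
      (measurable_const.sub measurable_id))).aestronglyMeasurable
  · rw [norm_smul, Real.norm_eq_abs, abs_of_nonneg (hnonneg y)]
    exact (mul_le_mul_of_nonneg_left (hB _) (hnonneg y)).trans_eq (mul_comm _ _)

lemma gconv_hasFDerivAt (hmeas : Measurable p) (hnonneg : ∀ y, 0 ≤ p y) (hpint : Integrable p) (ht : 0 < t)
    {q : EuclideanSpace ℝ (Fin n) → ℝ} (hq : GPoly n q)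
    (x : EuclideanSpace ℝ (Fin n)) :
    HasFDerivAt (gconv n p t q)
      (∫ y, p y • fderiv ℝ (gker n t q) (x - y)) x := by
  obtain ⟨B', hB'0, hB'⟩ := gker_fderiv_bound ht hq
  apply hasFDerivAt_integral_of_dominated_of_fderiv_le (hs := Metric.ball_mem_nhds x one_pos)
    (bound := fun y => B' * p y)
    (F' := fun x y => p y • fderiv ℝ (gker n t q) (x - y))
  · exact Filter.Eventually.of_forall fun x' =>
      (hmeas.mul (((gker_differentiable ht hq).continuous.measurable).comp
        (measurable_const.sub measurable_id))).aestronglyMeasurable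
  · exact gconv_integrand_integrable hmeas hnonneg hpint ht hq x
  · exact (gconv_fderiv_integrand_integrable hmeas hnonneg hpint ht hq x).aestronglyMeasurable
  · refine Filter.Eventually.of_forall fun y => fun x' _ => ?_
    have hns : ‖p y • fderiv ℝ (gker n t q) (x' - y)‖
        = |p y| * ‖fderiv ℝ (gker n t q) (x' - y)‖ := norm_smul _ _
    rw [hns, abs_of_nonneg (hnonneg y), mul_comm]
    exact mul_le_mul_of_nonneg_right (hB' _) (hnonneg y)
  · exact hpint.const_mul B'
  · refine Filter.Eventually.of_forall fun y => fun x' _ => ?_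
    have hK := ((gker_differentiable ht hq) (x' - y)).hasFDerivAt
    have ht' : HasFDerivAt (fun w : EuclideanSpace ℝ (Fin n) => w - y)
        (ContinuousLinearMap.id ℝ (EuclideanSpace ℝ (Fin n))) x' :=
      (hasFDerivAt_id x').sub_const y
    have hcomp := hK.comp x' ht'
    rw [ContinuousLinearMap.comp_id] at hcomp
    exact hcomp.const_mul (p y)

lemma gconv_differentiable (hmeas : Measurable p) (hnonneg : ∀ y, 0 ≤ p y) (hpint : Integrable p) (ht : 0 < t)
    {q : EuclideanSpace ℝ (Fin n) → ℝ} (hq : GPoly n q) :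
    Differentiable ℝ (gconv n p t q) :=
  fun x => (gconv_hasFDerivAt hmeas hnonneg hpint ht hq x).differentiableAt

lemma gconv_coordPDeriv (hmeas : Measurable p) (hnonneg : ∀ y, 0 ≤ p y) (hpint : Integrable p) (ht : 0 < t)
    {q : EuclideanSpace ℝ (Fin n) → ℝ} (hq : GPoly n q) (i : Fin n) :
    ∃ q', GPoly n q' ∧ coordPDeriv n i (gconv n p t q) = gconv n p t q' := by
  obtain ⟨q', hq', hq'e⟩ := gker_fderiv_apply ht hq i
  refine ⟨q', hq', ?_⟩
  funext x
  unfold coordPDeriv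
  rw [(gconv_hasFDerivAt hmeas hnonneg hpint ht hq x).fderiv]
  rw [ContinuousLinearMap.integral_apply
    (gconv_fderiv_integrand_integrable hmeas hnonneg hpint ht hq x)]
  unfold gconv
  congr 1
  funext y
  rw [ContinuousLinearMap.smul_apply, smul_eq_mul, hq'e]

lemma multiPDeriv_mem (hmeas : Measurable p) (hnonneg : ∀ y, 0 ≤ p y) (hpint : Integrable p) (ht : 0 < t)
    (β : Fin n → ℕ) {g : EuclideanSpace ℝ (Fin n) → ℝ}
    (hg : ∃ q, GPoly n q ∧ g = gconv n p t q) :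
    ∃ q', GPoly n q' ∧ multiPDeriv n β g = gconv n p t q' := by
  unfold multiPDeriv
  have hiter : ∀ (i : Fin n) (j : ℕ) (h : EuclideanSpace ℝ (Fin n) → ℝ),
      (∃ q, GPoly n q ∧ h = gconv n p t q) →
      ∃ q', GPoly n q' ∧ (coordPDeriv n i)^[j] h = gconv n p t q' := by
    intro i j
    induction j with
    | zero => intro h hh; simpa using hh
    | succ j ih =>
        intro h hh
        rw [Function.iterate_succ_apply]
        apply ih
        obtain ⟨q, hq, rfl⟩ := hh
        exact gconv_coordPDeriv hmeas hnonneg hpint ht hq i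
  have hfold : ∀ (l : List (Fin n)) (h : EuclideanSpace ℝ (Fin n) → ℝ),
      (∃ q, GPoly n q ∧ h = gconv n p t q) →
      ∃ q', GPoly n q' ∧
        l.foldr (fun i h => (coordPDeriv n i)^[β i] h) h = gconv n p t q' := by
    intro l
    induction l with
    | nil => intro h hh; simpa using hh
    | cons a l ih =>
        intro h hh
        obtain ⟨q', hq', he⟩ := ih h hh
        rw [List.foldr_cons, he]
        exact hiter a (β a) _ ⟨q', hq', rfl⟩
  exact hfold _ _ hg

end Conv

lemma gauss_poly_continuous (n m : ℕ) (t : ℝ) :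
    Continuous (fun z : EuclideanSpace ℝ (Fin n) =>
      (1 + ‖z‖) ^ m * Real.exp (-‖z‖ ^ 2 / (2 * t))) :=
  ((continuous_const.add continuous_norm).pow m).mul
    (Real.continuous_exp.comp (((continuous_norm.pow 2).neg).div_const _))

noncomputable def gmom (n : ℕ) (p : EuclideanSpace ℝ (Fin n) → ℝ) (t : ℝ) (m : ℕ) :
    EuclideanSpace ℝ (Fin n) → ℝ :=
  fun x => ∫ y, p y * ((1 + ‖x - y‖) ^ m * Real.exp (-‖x - y‖ ^ 2 / (2 * t)))

section Gmom

variable {n : ℕ} {p : EuclideanSpace ℝ (Fin n) → ℝ} {t : ℝ}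

lemma gmom_integrand_integrable (hmeas : Measurable p) (hnonneg : ∀ y, 0 ≤ p y)
    (hpint : Integrable p) (ht : 0 < t) (m : ℕ) (x : EuclideanSpace ℝ (Fin n)) :
    Integrable (fun y =>
      p y * ((1 + ‖x - y‖) ^ m * Real.exp (-‖x - y‖ ^ 2 / (2 * t)))) := by
  obtain ⟨B, hB0, hB⟩ := gauss_global_bound n m ht
  refine Integrable.mono' (hpint.const_mul B) ?_ (Filter.Eventually.of_forall fun y => ?_)
  · exact (hmeas.mul (((gauss_poly_continuous n m t).measurable).comp
      (measurable_const.sub measurable_id))).aestronglyMeasurable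
  · rw [Real.norm_eq_abs, abs_mul, abs_of_nonneg (hnonneg y),
      abs_of_nonneg (by positivity)]
    exact (mul_le_mul_of_nonneg_left (hB _) (hnonneg y)).trans_eq (mul_comm _ _)

lemma gmom_nonneg (hnonneg : ∀ y, 0 ≤ p y) (m : ℕ) (x : EuclideanSpace ℝ (Fin n)) :
    0 ≤ gmom n p t m x :=
  integral_nonneg fun y => mul_nonneg (hnonneg y) (by positivity)

lemma gmom_mono (hmeas : Measurable p) (hnonneg : ∀ y, 0 ≤ p y)
    (hpint : Integrable p) (ht : 0 < t) {m m' : ℕ} (hmm : m ≤ m')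
    (x : EuclideanSpace ℝ (Fin n)) : gmom n p t m x ≤ gmom n p t m' x := by
  apply integral_mono (gmom_integrand_integrable hmeas hnonneg hpint ht m x)
    (gmom_integrand_integrable hmeas hnonneg hpint ht m' x)
  intro y
  have h1 : (1:ℝ) ≤ 1 + ‖x - y‖ := by simp [norm_nonneg]
  have := pow_le_pow_right₀ h1 hmm
  apply mul_le_mul_of_nonneg_left _ (hnonneg y)
  exact mul_le_mul_of_nonneg_right this (Real.exp_pos _).le

lemma gmom_pos (hmeas : Measurable p) (hnonneg : ∀ y, 0 ≤ p y)
    (hpint : Integrable p) (ht : 0 < t) (hpos : 0 < ∫ y, p y)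
    (x : EuclideanSpace ℝ (Fin n)) : 0 < gmom n p t 0 x := by
  rcases (gmom_nonneg hnonneg 0 x).lt_or_eq with h | h
  · exact h
  exfalso
  have hint := gmom_integrand_integrable hmeas hnonneg hpint ht 0 x
  have h0 := (integral_eq_zero_iff_of_nonneg
      (fun y => mul_nonneg (hnonneg y) (by positivity : (0:ℝ) ≤ _)) hint).mp h.symm
  have hp0 : ∀ᵐ y : EuclideanSpace ℝ (Fin n), p y = 0 := by
    filter_upwards [h0] with y hy
    have hepos : (0:ℝ) < (1 + ‖x - y‖) ^ 0 * Real.exp (-‖x - y‖ ^ 2 / (2 * t)) := by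
      positivity
    exact (mul_eq_zero.mp hy).resolve_right hepos.ne'
  have : ∫ y, p y = 0 := by
    rw [integral_congr_ae hp0]
    simp
  linarith

lemma gmom_integrable (hmeas : Measurable p) (hnonneg : ∀ y, 0 ≤ p y)
    (hpint : Integrable p) (ht : 0 < t) (M : ℕ) :
    Integrable (gmom n p t M) := by
  set ψ : EuclideanSpace ℝ (Fin n) → ℝ :=
    fun z => (1 + ‖z‖) ^ M * Real.exp (-‖z‖ ^ 2 / (2 * t)) with hψ
  have hψc : Continuous ψ := gauss_poly_continuous n M t
  have hψ0 : ∀ z, 0 ≤ ψ z := fun z => by positivity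
  have hψi : Integrable ψ := integrable_poly_gauss n M ht
  have hsm : StronglyMeasurable (Function.uncurry
      (fun x y : EuclideanSpace ℝ (Fin n) => p y * ψ (x - y))) := by
    apply Measurable.stronglyMeasurable
    exact (hmeas.comp measurable_snd).mul
      (hψc.measurable.comp (measurable_fst.sub measurable_snd))
  have hmeasg : AEStronglyMeasurable (gmom n p t M) volume := by
    have := hsm.integral_prod_right (ν := volume)
    exact this.aestronglyMeasurable
  refine ⟨hmeasg, ?_⟩
  rw [hasFiniteIntegral_iff_ofReal
    (Filter.Eventually.of_forall fun x => gmom_nonneg hnonneg M x)]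
  have hswap : ∫⁻ x, ENNReal.ofReal (gmom n p t M x)
      = ∫⁻ y, ∫⁻ x, ENNReal.ofReal (p y * ψ (x - y)) := by
    rw [← lintegral_lintegral_swap]
    · apply lintegral_congr
      intro x
      exact ofReal_integral_eq_lintegral_ofReal
        (gmom_integrand_integrable hmeas hnonneg hpint ht M x)
        (Filter.Eventually.of_forall fun y => mul_nonneg (hnonneg y) (hψ0 _))
    · exact (ENNReal.measurable_ofReal.comp hsm.measurable).aemeasurable
  rw [hswap]
  have hinner : ∀ y : EuclideanSpace ℝ (Fin n),
      ∫⁻ x, ENNReal.ofReal (p y * ψ (x - y))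
        = ENNReal.ofReal (p y) * ∫⁻ z, ENNReal.ofReal (ψ z) := by
    intro y
    have : ∀ x : EuclideanSpace ℝ (Fin n), ENNReal.ofReal (p y * ψ (x - y))
        = ENNReal.ofReal (p y) * ENNReal.ofReal (ψ (x - y)) := fun x =>
      ENNReal.ofReal_mul (hnonneg y)
    rw [lintegral_congr this, lintegral_const_mul _
      (show Measurable fun a : EuclideanSpace ℝ (Fin n) => ENNReal.ofReal (ψ (a - y)) from
        ENNReal.measurable_ofReal.comp (hψc.measurable.comp (measurable_id.sub measurable_const)))]
    congr 1
    exact (measurePreserving_sub_right volume y).lintegral_comp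
      (show Measurable fun z : EuclideanSpace ℝ (Fin n) => ENNReal.ofReal (ψ z) from
        ENNReal.measurable_ofReal.comp hψc.measurable)
  rw [lintegral_congr hinner, lintegral_mul_const _ hmeas.ennreal_ofReal]
  have h1 : ∫⁻ y, ENNReal.ofReal (p y) < ⊤ := by
    rw [← hasFiniteIntegral_iff_ofReal (Filter.Eventually.of_forall hnonneg)]
    exact hpint.hasFiniteIntegral
  have h2 : ∫⁻ z, ENNReal.ofReal (ψ z) < ⊤ := by
    rw [← hasFiniteIntegral_iff_ofReal (Filter.Eventually.of_forall hψ0)]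
    exact hψi.hasFiniteIntegral
  exact ENNReal.mul_lt_top h1 h2

end Gmom

section Axioms
variable {n : ℕ} {p : EuclideanSpace ℝ (Fin n) → ℝ} {t : ℝ}

lemma gconv_le_gmom (hmeas : Measurable p) (hnonneg : ∀ y, 0 ≤ p y)
    (hpint : Integrable p) (ht : 0 < t)
    {q : EuclideanSpace ℝ (Fin n) → ℝ} (hq : GPoly n q) {C : ℝ} {mq : ℕ}
    (hC : 0 ≤ C) (hqb : ∀ z, |q z| ≤ C * (1 + ‖z‖) ^ mq)
    (x : EuclideanSpace ℝ (Fin n)) :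
    |gconv n p t q x| ≤ C * gmom n p t mq x := by
  unfold gconv gmom
  rw [← integral_const_mul _ _]
  calc |∫ y, p y * gker n t q (x - y)|
      ≤ ∫ y, |p y * gker n t q (x - y)| := by
        simpa only [Real.norm_eq_abs] using
          norm_integral_le_integral_norm (μ := volume) (fun y => p y * gker n t q (x - y))
    _ ≤ ∫ y, C * (p y * ((1 + ‖x - y‖) ^ mq * Real.exp (-‖x - y‖ ^ 2 / (2 * t)))) := by
        apply integral_mono (gconv_integrand_integrable hmeas hnonneg hpint ht hq x).abs
          ((gmom_integrand_integrable hmeas hnonneg hpint ht mq x).const_mul C)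
        intro y
        dsimp only
        unfold gker
        rw [abs_mul, abs_of_nonneg (hnonneg y), abs_mul, abs_of_pos (Real.exp_pos _)]
        calc p y * (|q (x - y)| * Real.exp (-‖x - y‖ ^ 2 / (2 * t)))
            ≤ p y * ((C * (1 + ‖x - y‖) ^ mq) * Real.exp (-‖x - y‖ ^ 2 / (2 * t))) := by
              apply mul_le_mul_of_nonneg_left _ (hnonneg y)
              exact mul_le_mul_of_nonneg_right (hqb _) (Real.exp_pos _).le
          _ = C * (p y * ((1 + ‖x - y‖) ^ mq * Real.exp (-‖x - y‖ ^ 2 / (2 * t)))) := by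
              ring

end Axioms

/-- Finiteness of derivative-ratio moments of the Gaussian-smoothed density:
`∫ p_t · Π_i |∂^{α_i} p_t / p_t|^{k_i} < ∞`. -/
theorem derivative_ratio_moments_finite
    (n : ℕ) (hn : 1 ≤ n)
    (p : EuclideanSpace ℝ (Fin n) → ℝ)
    (hmeas : Measurable p)
    (hnonneg : ∀ x, 0 ≤ p x)
    (hmass : ∫ x, p x = 1)
    (pt : ℝ → EuclideanSpace ℝ (Fin n) → ℝ)
    (hpt : ∀ t, 0 < t → ∀ x, pt t x =
      (2 * Real.pi * t) ^ (-(n : ℝ) / 2) *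
        ∫ y, p y * Real.exp (-‖x - y‖ ^ 2 / (2 * t)))
    (t : ℝ) (ht : 0 < t)
    (r : ℕ) (hr : 1 ≤ r)
    (α : Fin r → Fin n → ℕ) (k : Fin r → ℕ) (hk : ∀ i, 0 < k i) :
    Integrable (fun x : EuclideanSpace ℝ (Fin n) =>
      pt t x * ∏ i, |multiPDeriv n (α i) (pt t) x / pt t x| ^ k i) := by
  classical
  have hpint : Integrable p := by
    by_contra hni
    rw [integral_undef hni] at hmass
    exact one_ne_zero hmass.symm
  set c : ℝ := (2 * Real.pi * t) ^ (-(n : ℝ) / 2) with hc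
  have hcpos : 0 < c := Real.rpow_pos_of_pos (by positivity) _
  set P : EuclideanSpace ℝ (Fin n) → ℝ := fun y => c * p y with hP
  have hPmeas : Measurable P := measurable_const.mul hmeas
  have hPnonneg : ∀ y, 0 ≤ P y := fun y => mul_nonneg hcpos.le (hnonneg y)
  have hPint : Integrable P := hpint.const_mul c
  have hPpos : 0 < ∫ y, P y := by
    rw [hP, integral_const_mul c p, hmass, mul_one]
    exact hcpos
  have hbase : pt t = gconv n P t (fun _ => (1:ℝ)) := by
    funext x
    rw [hpt t ht x]
    unfold gconv gker
    rw [← integral_const_mul _ _]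
    congr 1
    funext y
    rw [hP]
    ring
  have hrep : ∀ i : Fin r, ∃ q, GPoly n q ∧
      multiPDeriv n (α i) (pt t) = gconv n P t q := fun i =>
    multiPDeriv_mem hPmeas hPnonneg hPint ht (α i) ⟨fun _ => 1, GPoly.const 1, hbase⟩
  choose q hq hqe using hrep
  choose C m hC hCb using fun i => (hq i).bound
  set M : ℕ := Finset.univ.sup m with hM
  have hCb' : ∀ i z, |q i z| ≤ C i * (1 + ‖z‖) ^ M := by
    intro i z
    refine (hCb i z).trans (mul_le_mul_of_nonneg_left
      (pow_le_pow_right₀ (by simp [norm_nonneg]) (Finset.le_sup (Finset.mem_univ i))) (hC i))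
  set K : ℕ := ∑ i, k i with hK
  have hK1 : 1 ≤ K := by
    calc 1 ≤ k ⟨0, hr⟩ := hk _
      _ ≤ K := Finset.single_le_sum (fun i _ => Nat.zero_le _) (Finset.mem_univ _)
  have hvpos : ∀ x, 0 < gmom n P t 0 x := gmom_pos hPmeas hPnonneg hPint ht hPpos
  have hptv : ∀ x, pt t x = gmom n P t 0 x := by
    intro x
    rw [hbase]
    unfold gconv gker gmom
    simp only [pow_zero, one_mul]
  have hptpos : ∀ x, 0 < pt t x := fun x => (hptv x) ▸ hvpos x
  have hDb : ∀ i x, |multiPDeriv n (α i) (pt t) x| ≤ C i * gmom n P t M x := by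
    intro i x
    rw [hqe i]
    exact gconv_le_gmom hPmeas hPnonneg hPint ht (hq i) (hC i) (hCb' i) x
  -- Hölder step
  have hHold : ∀ x, (gmom n P t M x) ^ K
      ≤ (gmom n P t 0 x) ^ (K - 1) * gmom n P t (M * K) x := by
    intro x
    have hem : Measurable fun y : EuclideanSpace ℝ (Fin n) =>
        Real.exp (-‖x - y‖ ^ 2 / (2 * t)) :=
      (Real.continuous_exp.comp
        (((continuous_norm.comp (continuous_const.sub continuous_id)).pow 2).neg.div_const _)).measurable
    have h := integral_mul_pow_le (K := K) volume
      (fun y => P y * Real.exp (-‖x - y‖ ^ 2 / (2 * t)))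
      (fun y => (1 + ‖x - y‖) ^ M)
      (fun y => mul_nonneg (hPnonneg y) (Real.exp_pos _).le)
      (fun y => by positivity)
      ((hPmeas.mul hem).aemeasurable)
      (((continuous_const.add (continuous_norm.comp
        (continuous_const.sub continuous_id))).pow M).measurable.aemeasurable)
      ((gmom_integrand_integrable hPmeas hPnonneg hPint ht 0 x).congr
        (Filter.Eventually.of_forall fun y => by ring))
      ((gmom_integrand_integrable hPmeas hPnonneg hPint ht M x).congr
        (Filter.Eventually.of_forall fun y => by ring))
      ((gmom_integrand_integrable hPmeas hPnonneg hPint ht (M * K) x).congr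
        (Filter.Eventually.of_forall fun y => by simp only [pow_mul]; ring))
      hK1
    have e1 : ∫ y, (P y * Real.exp (-‖x - y‖ ^ 2 / (2 * t))) * (1 + ‖x - y‖) ^ M
        = gmom n P t M x := by
      unfold gmom; congr 1; funext y; ring
    have e2 : ∫ y, P y * Real.exp (-‖x - y‖ ^ 2 / (2 * t)) = gmom n P t 0 x := by
      unfold gmom; congr 1; funext y; ring
    have e3 : ∫ y, (P y * Real.exp (-‖x - y‖ ^ 2 / (2 * t))) * ((1 + ‖x - y‖) ^ M) ^ K
        = gmom n P t (M * K) x := by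
      unfold gmom; congr 1; funext y; simp only [← pow_mul]; ring
    rwa [e1, e2, e3] at h
  set D : ℝ := ∏ i, (C i) ^ (k i) with hD
  have hD0 : 0 ≤ D := Finset.prod_nonneg fun i _ => pow_nonneg (hC i) _
  -- pointwise bound
  have hF : ∀ x, pt t x * ∏ i, |multiPDeriv n (α i) (pt t) x / pt t x| ^ k i
      ≤ D * gmom n P t (M * K) x := by
    intro x
    set v := gmom n P t 0 x with hv
    set W := gmom n P t M x with hW
    set U := gmom n P t (M * K) x with hU
    have hv0 : 0 < v := hvpos x
    have hW0 : 0 ≤ W := gmom_nonneg hPnonneg M x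
    have hU0 : 0 ≤ U := gmom_nonneg hPnonneg (M * K) x
    have hstep1 : ∏ i, |multiPDeriv n (α i) (pt t) x / pt t x| ^ k i
        ≤ ∏ i, (C i * (W / v)) ^ k i := by
      apply Finset.prod_le_prod (fun i _ => pow_nonneg (abs_nonneg _) _)
      intro i _
      apply pow_le_pow_left₀ (abs_nonneg _)
      rw [abs_div, hptv x, abs_of_pos hv0]
      rw [div_le_iff₀ hv0, mul_assoc, div_mul_cancel₀ _ hv0.ne']
      exact hDb i x
    have hstep2 : ∏ i, (C i * (W / v)) ^ k i = D * (W / v) ^ K := by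
      rw [hD, hK]
      rw [← Finset.prod_pow_eq_pow_sum]
      rw [← Finset.prod_mul_distrib]
      congr 1
      funext i
      rw [mul_pow]
    have hstep3 : v * (D * (W / v) ^ K) = D * (W ^ K / v ^ (K - 1)) := by
      rw [div_pow]
      have hvK : v ^ K = v ^ (K - 1) * v := by
        rw [← pow_succ, Nat.sub_add_cancel hK1]
      rw [hvK]
      field_simp
    have hstep4 : W ^ K / v ^ (K - 1) ≤ U := by
      rw [div_le_iff₀ (by positivity)]
      calc W ^ K ≤ v ^ (K - 1) * U := hHold x
        _ = U * v ^ (K - 1) := mul_comm _ _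
    calc pt t x * ∏ i, |multiPDeriv n (α i) (pt t) x / pt t x| ^ k i
        ≤ pt t x * (D * (W / v) ^ K) := by
          rw [← hstep2]
          exact mul_le_mul_of_nonneg_left hstep1 (hptpos x).le
      _ = v * (D * (W / v) ^ K) := by rw [hptv x]
      _ = D * (W ^ K / v ^ (K - 1)) := hstep3
      _ ≤ D * U := mul_le_mul_of_nonneg_left hstep4 hD0
  -- continuity
  have hptc : Continuous (pt t) := by
    rw [hbase]
    exact (gconv_differentiable hPmeas hPnonneg hPint ht (GPoly.const 1)).continuous
  have hgc : ∀ i, Continuous (multiPDeriv n (α i) (pt t)) := by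
    intro i
    rw [hqe i]
    exact (gconv_differentiable hPmeas hPnonneg hPint ht (hq i)).continuous
  have hFc : Continuous (fun x => pt t x *
      ∏ i, |multiPDeriv n (α i) (pt t) x / pt t x| ^ k i) := by
    apply hptc.mul
    apply continuous_finset_prod
    intro i _
    exact (((hgc i).div hptc fun x => (hptpos x).ne').abs).pow _
  refine Integrable.mono'
    ((gmom_integrable hPmeas hPnonneg hPint ht (M * K)).const_mul D)
    hFc.aestronglyMeasurable (Filter.Eventually.of_forall fun x => ?_)
  rw [Real.norm_eq_abs, abs_of_nonneg (mul_nonneg (hptpos x).le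
    (Finset.prod_nonneg fun i _ => pow_nonneg (abs_nonneg _) _))]
  exact hF x
end
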